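/- arXiv:1506.07778 — 6 statements merged into one kernel-verified Lean document; each statement's English description precedes it below -/
import Mathlib

section
/- Let F : ℕ → ℂ satisfy ‖F(n)‖ ≤ 1 for all n ≥ 1. Suppose there exist a constant C > 0 and a finite set S of pairs of prime numbers such that for all primes p ≠ q with (p,q) ∉ S one has limsup_{M→∞} (1/M)·‖∑_{m=1}^{M} F(p·m)·conj(F(q·m))‖ ≤ C/(p·q). Then (1/N)·∑_{n=1}^{N} μ(n)·F(n) → 0 as N → ∞. -/
/-!
Fix a finite set `P` of primes `p ≥ K` and put `L = ∑_{p ∈ P} 1/p`. By the Turán–Kubilius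
inequality, `ω_P(n) = #{p ∈ P | p ∣ n}` is close to `L` on average, so `L · ∑_{n ≤ N} μ(n) F(n)`
is close to `∑_{p ∈ P} ∑_{m ≤ N/p} μ(pm) F(pm)`. Since `μ(pm) = -μ(m)` unless `p ∣ m`, this is in
turn close to `-∑_{m ≤ N/K} μ(m) ∑_{p ∈ P, pm ≤ N} F(pm)`, which Cauchy–Schwarz bounds by `√(N/K)`
times the square root of the summed correlations `∑_m F(pm) conj(F(qm))`: the diagonal `p = q`
contributes `N L`, the other pairs `O(C N L² / K)`. Altogether
`|∑_{n ≤ N} μ(n) F(n)| ≤ N (√(2/L) + 1/K + √((1 + 2C/K)/K))` for large `N`, which is small once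
`K` and then `L` are large; `L` can be made large because `∑ 1/p` diverges.
-/

open Finset Filter
open scoped ComplexConjugate ArithmeticFunction.Moebius

theorem sum_Icc_filter_dvd {M : Type*} [AddCommMonoid M] (f : ℕ → M) {d : ℕ} (hd : 0 < d)
    (N : ℕ) : ∑ n ∈ Icc 1 N with d ∣ n, f n = ∑ m ∈ Icc 1 (N / d), f (d * m) := by
  symm
  refine sum_nbij' (d * ·) (· / d) ?_ ?_ ?_ ?_ (fun _ _ => rfl)
  · simp only [mem_Icc, mem_filter, Nat.le_div_iff_mul_le hd]
    rintro m ⟨hm, hmN⟩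
    exact ⟨⟨Nat.mul_pos hd hm, by rwa [mul_comm]⟩, dvd_mul_right d m⟩
  · simp only [mem_filter, mem_Icc, Nat.le_div_iff_mul_le hd]
    rintro _ ⟨⟨hn, hnN⟩, m, rfl⟩
    rw [Nat.mul_div_cancel_left m hd, mul_comm m, one_mul]
    exact ⟨Nat.le_mul_of_pos_right d (Nat.pos_of_mul_pos_left hn), hnN⟩
  · intro m _
    exact Nat.mul_div_cancel_left m hd
  · intro n hn
    exact Nat.mul_div_cancel' (mem_filter.1 hn).2

theorem card_Icc_filter_dvd {d : ℕ} (hd : 0 < d) (N : ℕ) : #{n ∈ Icc 1 N | d ∣ n} = N / d := by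
  rw [card_eq_sum_ones, sum_Icc_filter_dvd (fun _ => 1) hd N]
  simp

section TuranKubilius

variable {P : Finset ℕ}

theorem sum_sum_Icc_div_eq_sum_card_nsmul {M : Type*} [AddCommMonoid M] (f : ℕ → M)
    (hP : ∀ p ∈ P, 0 < p) (N : ℕ) :
    ∑ p ∈ P, ∑ m ∈ Icc 1 (N / p), f (p * m) = ∑ n ∈ Icc 1 N, #{p ∈ P | p ∣ n} • f n := by
  calc _ = ∑ p ∈ P, ∑ n ∈ Icc 1 N, if p ∣ n then f n else 0 := by
        refine sum_congr rfl fun p hp => ?_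
        rw [← sum_Icc_filter_dvd f (hP p hp), sum_filter]
    _ = _ := by
        rw [sum_comm]
        refine sum_congr rfl fun n _ => ?_
        rw [← sum_filter, sum_const]

theorem card_filter_dvd_prime_mul_le (hP : ∀ p ∈ P, p.Prime) {p : ℕ} (hp : p.Prime) (m : ℕ) :
    #{q ∈ P | q ∣ p * m} ≤ #{q ∈ P | q ∣ m} + 1 := by
  refine (card_le_card fun q hq => ?_).trans (card_insert_le p _)
  obtain ⟨hqP, hq⟩ := mem_filter.1 hq
  rcases (hP q hqP).dvd_mul.1 hq with h | h
  · exact mem_insert.2 (Or.inl ((Nat.prime_dvd_prime_iff_eq (hP q hqP) hp).1 h))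
  · exact mem_insert_of_mem (mem_filter.2 ⟨hqP, h⟩)

theorem sum_card_filter_dvd (hP : ∀ p ∈ P, 0 < p) (N : ℕ) :
    ∑ n ∈ Icc 1 N, (#{p ∈ P | p ∣ n} : ℝ) = ∑ p ∈ P, ((N / p : ℕ) : ℝ) := by
  simpa using (sum_sum_Icc_div_eq_sum_card_nsmul (fun _ => (1 : ℝ)) hP N).symm

theorem sum_card_filter_dvd_le (hP : ∀ p ∈ P, 0 < p) (N : ℕ) :
    ∑ n ∈ Icc 1 N, (#{p ∈ P | p ∣ n} : ℝ) ≤ N * ∑ p ∈ P, (p : ℝ)⁻¹ := by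
  rw [sum_card_filter_dvd hP, mul_sum]
  exact sum_le_sum fun p _ => Nat.cast_div_le

theorem sub_card_le_sum_card_filter_dvd (hP : ∀ p ∈ P, 0 < p) (N : ℕ) :
    N * ∑ p ∈ P, (p : ℝ)⁻¹ - #P ≤ ∑ n ∈ Icc 1 N, (#{p ∈ P | p ∣ n} : ℝ) := by
  rw [sum_card_filter_dvd hP, mul_sum, card_eq_sum_ones, Nat.cast_sum, ← sum_sub_distrib]
  refine sum_le_sum fun p _ => ?_
  have := Nat.lt_floor_add_one ((N : ℝ) / p)
  rw [Nat.floor_div_eq_div] at this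
  rw [← div_eq_mul_inv]
  push_cast
  linarith

theorem sum_sq_card_filter_dvd_le (hP : ∀ p ∈ P, p.Prime) (N : ℕ) :
    ∑ n ∈ Icc 1 N, (#{p ∈ P | p ∣ n} : ℝ) ^ 2
      ≤ N * (∑ p ∈ P, (p : ℝ)⁻¹) * (∑ p ∈ P, (p : ℝ)⁻¹ + 1) := by
  have hP₀ : ∀ p ∈ P, 0 < p := fun p hp => (hP p hp).pos
  set L := ∑ p ∈ P, (p : ℝ)⁻¹
  calc _ = ∑ p ∈ P, ∑ m ∈ Icc 1 (N / p), (#{q ∈ P | q ∣ p * m} : ℝ) := by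
        rw [sum_sum_Icc_div_eq_sum_card_nsmul (fun n => (#{q ∈ P | q ∣ n} : ℝ)) hP₀]
        simp only [nsmul_eq_mul, sq]
    _ ≤ ∑ p ∈ P, ∑ m ∈ Icc 1 (N / p), ((#{q ∈ P | q ∣ m} : ℝ) + 1) := by
        gcongr with p hp m
        exact_mod_cast card_filter_dvd_prime_mul_le hP (hP p hp) m
    _ ≤ ∑ p ∈ P, ((N / p : ℕ) : ℝ) * (L + 1) := by
        gcongr with p hp
        rw [sum_add_distrib, mul_add_one]
        simpa using sum_card_filter_dvd_le hP₀ (N / p)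
    _ ≤ N * L * (L + 1) := by
        rw [mul_sum, sum_mul]
        exact sum_le_sum fun p _ => by gcongr; exact Nat.cast_div_le

theorem sum_sq_card_filter_dvd_sub_le (hP : ∀ p ∈ P, p.Prime) (N : ℕ) :
    ∑ n ∈ Icc 1 N, ((#{p ∈ P | p ∣ n} : ℝ) - ∑ p ∈ P, (p : ℝ)⁻¹) ^ 2
      ≤ N * (∑ p ∈ P, (p : ℝ)⁻¹) + 2 * #P * ∑ p ∈ P, (p : ℝ)⁻¹ := by
  have hP₀ : ∀ p ∈ P, 0 < p := fun p hp => (hP p hp).pos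
  set L := ∑ p ∈ P, (p : ℝ)⁻¹
  have hL : 0 ≤ L := sum_nonneg fun p _ => by positivity
  have h₁ := sub_card_le_sum_card_filter_dvd hP₀ N
  have h₂ := sum_sq_card_filter_dvd_le hP N
  have hexpand : ∑ n ∈ Icc 1 N, ((#{p ∈ P | p ∣ n} : ℝ) - L) ^ 2
      = ∑ n ∈ Icc 1 N, (#{p ∈ P | p ∣ n} : ℝ) ^ 2
        - 2 * L * ∑ n ∈ Icc 1 N, (#{p ∈ P | p ∣ n} : ℝ) + N * L ^ 2 := by
    simp only [sub_sq, sum_add_distrib, sum_sub_distrib, ← sum_mul, ← mul_sum, sum_const,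
      Nat.card_Icc, nsmul_eq_mul]
    push_cast
    ring
  rw [hexpand]
  nlinarith

end TuranKubilius

theorem norm_mul_sum_sub_sum_prime_mul_le {a : ℕ → ℂ} (ha : ∀ n, 1 ≤ n → ‖a n‖ ≤ 1) {P : Finset ℕ}
    (hP : ∀ p ∈ P, p.Prime) {N : ℕ} (hN : 2 * #P ≤ N) :
    ‖((∑ p ∈ P, (p : ℝ)⁻¹ : ℝ) : ℂ) * ∑ n ∈ Icc 1 N, a n
        - ∑ p ∈ P, ∑ m ∈ Icc 1 (N / p), a (p * m)‖
      ≤ N * √(2 * ∑ p ∈ P, (p : ℝ)⁻¹) := by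
  set L := ∑ p ∈ P, (p : ℝ)⁻¹
  set W : ℕ → ℝ := fun n => #{p ∈ P | p ∣ n}
  have hdiff : (L : ℂ) * ∑ n ∈ Icc 1 N, a n - ∑ p ∈ P, ∑ m ∈ Icc 1 (N / p), a (p * m)
      = ∑ n ∈ Icc 1 N, a n * ((L - W n : ℝ) : ℂ) := by
    rw [sum_sum_Icc_div_eq_sum_card_nsmul a fun p hp => (hP p hp).pos, mul_sum,
      ← sum_sub_distrib]
    refine sum_congr rfl fun n _ => ?_
    simp only [W, nsmul_eq_mul, Complex.ofReal_sub, Complex.ofReal_natCast]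
    ring
  have hvar : ∑ n ∈ Icc 1 N, |W n - L| ^ 2 ≤ N * (2 * L) := by
    have hL : 0 ≤ L := sum_nonneg fun p _ => by positivity
    have hN' : (2 * #P : ℝ) ≤ N := by exact_mod_cast hN
    simp only [sq_abs]
    nlinarith [sum_sq_card_filter_dvd_sub_le hP N]
  calc _ = ‖∑ n ∈ Icc 1 N, a n * ((L - W n : ℝ) : ℂ)‖ := by rw [hdiff]
    _ ≤ ∑ n ∈ Icc 1 N, 1 * |W n - L| := by
        refine (norm_sum_le _ _).trans (sum_le_sum fun n hn => ?_)
        rw [norm_mul, Complex.norm_real, Real.norm_eq_abs, abs_sub_comm]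
        exact mul_le_mul_of_nonneg_right (ha n (mem_Icc.1 hn).1) (abs_nonneg _)
    _ ≤ √(∑ n ∈ Icc 1 N, 1 ^ 2) * √(∑ n ∈ Icc 1 N, |W n - L| ^ 2) :=
        Real.sum_mul_le_sqrt_mul_sqrt _ _ _
    _ ≤ √N * √(N * (2 * L)) := by
        gcongr
        simp
    _ = N * √(2 * L) := by
        rw [← Real.sqrt_mul (Nat.cast_nonneg _), ← mul_assoc,
          Real.sqrt_mul (mul_self_nonneg _), Real.sqrt_mul_self (Nat.cast_nonneg _)]

theorem norm_moebius_le_one (n : ℕ) : ‖(μ n : ℂ)‖ ≤ 1 := by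
  rw [Complex.norm_intCast]
  exact_mod_cast ArithmeticFunction.abs_moebius_le_one

theorem moebius_prime_mul_of_dvd {p m : ℕ} (hp : p.Prime) (h : p ∣ m) : μ (p * m) = 0 :=
  ArithmeticFunction.moebius_eq_zero_of_not_squarefree fun hsq =>
    hp.one_lt.ne' (Nat.isUnit_iff.1 (hsq p (mul_dvd_mul_left p h)))

theorem moebius_prime_mul_add_moebius {p m : ℕ} (hp : p.Prime) (h : ¬p ∣ m) :
    μ (p * m) + μ m = 0 := by
  rw [ArithmeticFunction.isMultiplicative_moebius.map_mul_of_coprime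
    ((Nat.Prime.coprime_iff_not_dvd hp).2 h), ArithmeticFunction.moebius_apply_prime hp]
  ring

theorem norm_sum_sum_moebius_prime_mul_add_le {F : ℕ → ℂ} (hF : ∀ n, 1 ≤ n → ‖F n‖ ≤ 1)
    {P : Finset ℕ} (hP : ∀ p ∈ P, p.Prime) (N : ℕ) :
    ‖∑ p ∈ P, ∑ m ∈ Icc 1 (N / p), ((μ (p * m) : ℂ) + μ m) * F (p * m)‖
      ≤ N * ∑ p ∈ P, ((p : ℝ) ^ 2)⁻¹ := by
  rw [mul_sum]
  refine (norm_sum_le _ _).trans (sum_le_sum fun p hp => (norm_sum_le _ _).trans ?_)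
  have hterm : ∀ m ∈ Icc 1 (N / p), ‖((μ (p * m) : ℂ) + μ m) * F (p * m)‖
      ≤ if p ∣ m then 1 else 0 := by
    intro m hm
    have hpm : 0 < p * m := Nat.mul_pos (hP p hp).pos (mem_Icc.1 hm).1
    split_ifs with hdvd
    · rw [moebius_prime_mul_of_dvd (hP p hp) hdvd, Int.cast_zero, zero_add, norm_mul]
      exact mul_le_one₀ (norm_moebius_le_one m) (norm_nonneg _) (hF _ hpm)
    · rw [← Int.cast_add, moebius_prime_mul_add_moebius (hP p hp) hdvd]
      simp
  calc _ ≤ ∑ m ∈ Icc 1 (N / p), if p ∣ m then (1 : ℝ) else 0 := sum_le_sum hterm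
    _ = ((N / p / p : ℕ) : ℝ) := by
        rw [sum_boole, card_Icc_filter_dvd (hP p hp).pos]
    _ ≤ N * ((p : ℝ) ^ 2)⁻¹ := by
        rw [Nat.div_div_eq_div_mul, ← div_eq_mul_inv, sq]
        exact_mod_cast Nat.cast_div_le

theorem norm_sum_mul_sum_le {ι κ : Type*} (s : Finset ι) {c : ι → ℂ}
    (hc : ∀ i ∈ s, ‖c i‖ ≤ 1) (P : Finset κ) (b : κ → ι → ℂ) :
    ‖∑ i ∈ s, c i * ∑ p ∈ P, b p i‖
      ≤ √(#s : ℝ) * √(∑ p ∈ P, ∑ q ∈ P, ‖∑ i ∈ s, b p i * conj (b q i)‖) := by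
  have hsq : ∑ i ∈ s, ‖∑ p ∈ P, b p i‖ ^ 2
      = ‖∑ p ∈ P, ∑ q ∈ P, ∑ i ∈ s, b p i * conj (b q i)‖ := by
    have : ((∑ i ∈ s, ‖∑ p ∈ P, b p i‖ ^ 2 : ℝ) : ℂ)
        = ∑ p ∈ P, ∑ q ∈ P, ∑ i ∈ s, b p i * conj (b q i) := by
      push_cast
      simp only [← Complex.mul_conj', map_sum, sum_mul_sum]
      rw [sum_comm]
      exact sum_congr rfl fun _ _ => sum_comm
    rw [← this, Complex.norm_real, Real.norm_of_nonneg (by positivity)]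
  calc _ ≤ ∑ i ∈ s, 1 * ‖∑ p ∈ P, b p i‖ := by
        refine (norm_sum_le _ _).trans (sum_le_sum fun i hi => ?_)
        rw [norm_mul]
        exact mul_le_mul_of_nonneg_right (hc i hi) (norm_nonneg _)
    _ ≤ √(∑ i ∈ s, 1 ^ 2) * √(∑ i ∈ s, ‖∑ p ∈ P, b p i‖ ^ 2) :=
        Real.sum_mul_le_sqrt_mul_sqrt _ _ _
    _ ≤ _ := by
        rw [hsq]
        gcongr
        · simp
        · exact (norm_sum_le _ _).trans (sum_le_sum fun p _ => norm_sum_le _ _)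

def corrSum (F : ℕ → ℂ) (p q M : ℕ) : ℂ :=
  ∑ m ∈ Icc 1 M, F (p * m) * conj (F (q * m))

theorem norm_corrSum_le {F : ℕ → ℂ} (hF : ∀ n, 1 ≤ n → ‖F n‖ ≤ 1) {p q : ℕ} (hp : 0 < p)
    (hq : 0 < q) (M : ℕ) : ‖corrSum F p q M‖ ≤ M := by
  refine (norm_sum_le _ _).trans ?_
  calc _ ≤ ∑ m ∈ Icc 1 M, (1 : ℝ) := by
        refine sum_le_sum fun m hm => ?_
        have hm : 0 < m := (mem_Icc.1 hm).1
        rw [norm_mul, Complex.norm_conj]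
        exact mul_le_one₀ (hF _ (Nat.mul_pos hp hm)) (norm_nonneg _) (hF _ (Nat.mul_pos hq hm))
    _ = M := by simp

theorem norm_sum_sum_moebius_mul_prime_mul_le (F : ℕ → ℂ) {P : Finset ℕ} {K : ℕ} (hK : 0 < K)
    (hP : ∀ p ∈ P, K ≤ p) (N : ℕ) :
    ‖∑ p ∈ P, ∑ m ∈ Icc 1 (N / p), (μ m : ℂ) * F (p * m)‖
      ≤ √(N / K : ℕ) * √(∑ p ∈ P, ∑ q ∈ P, ‖corrSum F p q (min (N / p) (N / q))‖) := by
  have hdiv : ∀ p ∈ P, N / p ≤ N / K := fun p hp => Nat.div_le_div_left (hP p hp) hK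
  set b : ℕ → ℕ → ℂ := fun p m => if m ≤ N / p then F (p * m) else 0
  have hB : ∑ p ∈ P, ∑ m ∈ Icc 1 (N / p), (μ m : ℂ) * F (p * m)
      = ∑ m ∈ Icc 1 (N / K), (μ m : ℂ) * ∑ p ∈ P, b p m := by
    simp only [mul_sum]
    rw [sum_comm]
    refine sum_congr rfl fun p hp => ?_
    simp only [b, mul_ite, mul_zero]
    rw [← sum_filter]
    congr 1
    ext m
    simp only [mem_filter, mem_Icc]
    have := hdiv p hp
    omega
  have hcorr : ∀ p ∈ P, ∀ q ∈ P, ∑ m ∈ Icc 1 (N / K), b p m * conj (b q m)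
      = corrSum F p q (min (N / p) (N / q)) := by
    intro p hp q hq
    calc _ = ∑ m ∈ Icc 1 (N / K) with m ≤ N / p ∧ m ≤ N / q, F (p * m) * conj (F (q * m)) := by
          rw [sum_filter]
          refine sum_congr rfl fun m _ => ?_
          simp only [b]
          split_ifs <;> simp_all
      _ = _ := by
          congr 1
          ext m
          simp only [mem_filter, mem_Icc, le_min_iff]
          have := hdiv p hp
          omega
  rw [hB]
  refine (norm_sum_mul_sum_le _ (fun m _ => norm_moebius_le_one m) P b).trans ?_
  rw [Nat.card_Icc, Nat.add_sub_cancel]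
  gcongr with p hp q hq
  rw [hcorr p hp q hq]

theorem sum_sum_norm_corrSum_le {F : ℕ → ℂ} (hF : ∀ n, 1 ≤ n → ‖F n‖ ≤ 1) {P : Finset ℕ}
    {K : ℕ} (hK : 0 < K) (hP : ∀ p ∈ P, K ≤ p) {D : ℝ} (hD : 0 ≤ D) {N : ℕ}
    (hcorr : ∀ p ∈ P, ∀ q ∈ P, p ≠ q → ‖corrSum F p q (min (N / p) (N / q))‖
      ≤ D / (p * q) * (min (N / p) (N / q) : ℕ)) :
    ∑ p ∈ P, ∑ q ∈ P, ‖corrSum F p q (min (N / p) (N / q))‖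
      ≤ N * ∑ p ∈ P, (p : ℝ)⁻¹ + D * N / K * (∑ p ∈ P, (p : ℝ)⁻¹) ^ 2 := by
  have hP₀ : ∀ p ∈ P, 0 < p := fun p hp => hK.trans_le (hP p hp)
  have hterm : ∀ p ∈ P, ∀ q ∈ P, ‖corrSum F p q (min (N / p) (N / q))‖
      ≤ (if p = q then N * (p : ℝ)⁻¹ else 0) + D * N / K * ((p : ℝ)⁻¹ * (q : ℝ)⁻¹) := by
    intro p hp q hq
    split_ifs with hpq
    · subst hpq
      rw [min_self]
      calc _ ≤ ((N / p : ℕ) : ℝ) := norm_corrSum_le hF (hP₀ p hp) (hP₀ p hp) _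
        _ ≤ N * (p : ℝ)⁻¹ := Nat.cast_div_le
        _ ≤ _ := le_add_of_nonneg_right (by positivity)
    · calc _ ≤ D / (p * q) * (min (N / p) (N / q) : ℕ) := hcorr p hp q hq hpq
        _ ≤ D / (p * q) * (N / K) := by
            gcongr
            exact (Nat.cast_le.2 ((min_le_right _ _).trans
              (Nat.div_le_div_left (hP q hq) hK))).trans Nat.cast_div_le
        _ = _ := by
            rw [zero_add]
            field_simp
  calc _ ≤ ∑ p ∈ P, ∑ q ∈ P, ((if p = q then N * (p : ℝ)⁻¹ else 0)
          + D * N / K * ((p : ℝ)⁻¹ * (q : ℝ)⁻¹)) :=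
        sum_le_sum fun p hp => sum_le_sum fun q hq => hterm p hp q hq
    _ = _ := by
        simp only [sum_add_distrib, sum_ite_eq, ← mul_sum]
        rw [sum_ite_mem, inter_self, ← mul_sum, ← sum_mul, sq]

theorem sum_inv_sq_le_sum_inv_mul_inv {P : Finset ℕ} {K : ℕ} (hK : 0 < K)
    (hP : ∀ p ∈ P, K ≤ p) : ∑ p ∈ P, ((p : ℝ) ^ 2)⁻¹ ≤ (∑ p ∈ P, (p : ℝ)⁻¹) * (1 / K) := by
  rw [sum_mul]
  refine sum_le_sum fun p hp => ?_
  have hKp : (K : ℝ) ≤ p := by exact_mod_cast hP p hp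
  rw [sq, mul_inv, one_div]
  gcongr

theorem sqrt_div_mul_sqrt_le {N K L : ℝ} (D : ℝ) (hN : 0 ≤ N) (hK : 0 < K) (hL : 1 ≤ L) :
    √(N / K) * √(N * L + D * N / K * L ^ 2) ≤ N * L * √((1 + D / K) / K) := by
  have hLL : L ≤ L ^ 2 := by nlinarith
  calc _ ≤ √((N * L) ^ 2 * ((1 + D / K) / K)) := by
        rw [← Real.sqrt_mul (by positivity)]
        apply Real.sqrt_le_sqrt
        field_simp
        nlinarith [mul_le_mul_of_nonneg_left hLL (by positivity : 0 ≤ N ^ 2 * K)]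
    _ = _ := by rw [Real.sqrt_mul (sq_nonneg _), Real.sqrt_sq (by positivity)]

theorem norm_sum_moebius_mul_le {F : ℕ → ℂ} (hF : ∀ n, 1 ≤ n → ‖F n‖ ≤ 1) {P : Finset ℕ}
    {K : ℕ} (hK : 0 < K) (hP : ∀ p ∈ P, p.Prime ∧ K ≤ p) (hL : 1 ≤ ∑ p ∈ P, (p : ℝ)⁻¹)
    {D : ℝ} (hD : 0 ≤ D) {N : ℕ} (hN : 2 * #P ≤ N)
    (hcorr : ∀ p ∈ P, ∀ q ∈ P, p ≠ q → ‖corrSum F p q (min (N / p) (N / q))‖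
      ≤ D / (p * q) * (min (N / p) (N / q) : ℕ)) :
    ‖∑ n ∈ Icc 1 N, (μ n : ℂ) * F n‖
      ≤ N * (√(2 / ∑ p ∈ P, (p : ℝ)⁻¹) + 1 / K + √((1 + D / K) / K)) := by
  set L := ∑ p ∈ P, (p : ℝ)⁻¹
  have hL₀ : 0 < L := one_pos.trans_le hL
  have hK' : (0 : ℝ) < K := by exact_mod_cast hK
  set A := ∑ n ∈ Icc 1 N, (μ n : ℂ) * F n
  set B := ∑ p ∈ P, ∑ m ∈ Icc 1 (N / p), (μ (p * m) : ℂ) * F (p * m)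
  set B' := ∑ p ∈ P, ∑ m ∈ Icc 1 (N / p), (μ m : ℂ) * F (p * m)
  have hμF : ∀ n, 1 ≤ n → ‖(μ n : ℂ) * F n‖ ≤ 1 := fun n hn => by
    rw [norm_mul]
    exact mul_le_one₀ (norm_moebius_le_one n) (norm_nonneg _) (hF n hn)
  have h₁ : ‖(L : ℂ) * A - B‖ ≤ N * L * √(2 / L) := by
    calc _ ≤ N * √(2 * L) := norm_mul_sum_sub_sum_prime_mul_le hμF (fun p hp => (hP p hp).1) hN
      _ = _ := by
          rw [show 2 * L = L ^ 2 * (2 / L) by field_simp, Real.sqrt_mul (sq_nonneg _),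
            Real.sqrt_sq hL₀.le, mul_assoc]
  have h₂ : ‖B + B'‖ ≤ N * L * (1 / K) := by
    calc ‖B + B'‖ = ‖∑ p ∈ P, ∑ m ∈ Icc 1 (N / p), ((μ (p * m) : ℂ) + μ m) * F (p * m)‖ := by
          simp only [B, B', ← sum_add_distrib, add_mul]
      _ ≤ N * ∑ p ∈ P, ((p : ℝ) ^ 2)⁻¹ :=
          norm_sum_sum_moebius_prime_mul_add_le hF (fun p hp => (hP p hp).1) N
      _ ≤ _ := by
          rw [mul_assoc]
          gcongr
          exact sum_inv_sq_le_sum_inv_mul_inv hK fun p hp => (hP p hp).2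
  have h₃ : ‖B'‖ ≤ N * L * √((1 + D / K) / K) := by
    calc ‖B'‖ ≤ √(N / K : ℕ) * √(∑ p ∈ P, ∑ q ∈ P, ‖corrSum F p q (min (N / p) (N / q))‖) :=
          norm_sum_sum_moebius_mul_prime_mul_le F hK (fun p hp => (hP p hp).2) N
      _ ≤ √(N / K) * √(N * L + D * N / K * L ^ 2) := by
          gcongr
          · exact Nat.cast_div_le
          · exact sum_sum_norm_corrSum_le hF hK (fun p hp => (hP p hp).2) hD hcorr
      _ ≤ _ := sqrt_div_mul_sqrt_le D (Nat.cast_nonneg N) hK' hL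
  have hA : L * ‖A‖ ≤ L * (N * (√(2 / L) + 1 / K + √((1 + D / K) / K))) := by
    calc L * ‖A‖ = ‖((L : ℂ) * A - B) + (B + B') - B'‖ := by
          rw [show (L : ℂ) * A - B + (B + B') - B' = L * A by ring, norm_mul,
            Complex.norm_real, Real.norm_of_nonneg hL₀.le]
      _ ≤ ‖(L : ℂ) * A - B‖ + ‖B + B'‖ + ‖B'‖ := norm_sub_le_of_le (norm_add_le _ _) le_rfl
      _ ≤ _ := by linarith
  exact le_of_mul_le_mul_left hA hL₀

theorem eventually_norm_corrSum_le {F : ℕ → ℂ} (hF : ∀ n, 1 ≤ n → ‖F n‖ ≤ 1) {p q : ℕ}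
    (hp : 0 < p) (hq : 0 < q) {c c' : ℝ}
    (h : limsup (fun M : ℕ => 1 / (M : ℝ) * ‖corrSum F p q M‖) atTop ≤ c) (hc : c < c') :
    ∀ᶠ M in atTop, ‖corrSum F p q M‖ ≤ c' * M := by
  have hbdd : IsBoundedUnder (· ≤ ·) atTop fun M : ℕ => 1 / (M : ℝ) * ‖corrSum F p q M‖ :=
    isBoundedUnder_of ⟨1, fun M => by
      rw [one_div_mul_eq_div]
      exact div_le_one_of_le₀ (norm_corrSum_le hF hp hq M) (Nat.cast_nonneg M)⟩
  filter_upwards [eventually_lt_of_limsup_lt (h.trans_lt hc) hbdd, eventually_gt_atTop 0]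
    with M hM hM₀
  rw [one_div_mul_eq_div, div_lt_iff₀ (by exact_mod_cast hM₀)] at hM
  exact hM.le

theorem eventually_forall_norm_corrSum_min_le {F : ℕ → ℂ} (hF : ∀ n, 1 ≤ n → ‖F n‖ ≤ 1)
    {P : Finset ℕ} (hP : ∀ p ∈ P, 0 < p) {C : ℝ} (hC : 0 < C)
    (h : ∀ p ∈ P, ∀ q ∈ P, p ≠ q →
      limsup (fun M : ℕ => 1 / (M : ℝ) * ‖corrSum F p q M‖) atTop ≤ C / (p * q)) :
    ∀ᶠ N in atTop, ∀ p ∈ P, ∀ q ∈ P, p ≠ q →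
      ‖corrSum F p q (min (N / p) (N / q))‖ ≤ 2 * C / (p * q) * (min (N / p) (N / q) : ℕ) := by
  simp only [eventually_all_finset, eventually_imp_distrib_left]
  intro p hp q hq hpq
  have hmin : Tendsto (fun N => min (N / p) (N / q)) atTop atTop :=
    tendsto_inf_atTop _ (Nat.tendsto_div_const_atTop (hP p hp).ne')
      (Nat.tendsto_div_const_atTop (hP q hq).ne')
  refine hmin.eventually (eventually_norm_corrSum_le hF (hP p hp) (hP q hq) (h p hp q hq hpq) ?_)
  have : (0 : ℝ) < p * q := by have := hP p hp; have := hP q hq; positivity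
  gcongr
  linarith

theorem tendsto_sum_inv_primes_Ico_atTop (K : ℕ) :
    Tendsto (fun n => ∑ p ∈ Ico K n with p.Prime, (p : ℝ)⁻¹) atTop atTop := by
  set f := Set.indicator {p | p.Prime} fun n : ℕ => (1 : ℝ) / n
  have hf : Tendsto (fun n => ∑ i ∈ range n, f i) atTop atTop :=
    (not_summable_iff_tendsto_nat_atTop_of_nonneg
      (Set.indicator_nonneg fun _ _ => by positivity)).1 not_summable_one_div_on_primes
  refine (tendsto_atTop_add_const_right _ (-∑ i ∈ range K, f i) hf).congr' ?_
  filter_upwards [eventually_ge_atTop K] with n hn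
  rw [sum_filter, ← sub_eq_add_neg, ← sum_Ico_eq_sub _ hn]
  refine sum_congr rfl fun p _ => ?_
  simp [f, Set.indicator_apply]

theorem tendsto_sqrt_two_div_sum_inv_primes_Ico (K : ℕ) :
    Tendsto (fun n => √(2 / ∑ p ∈ Ico K n with p.Prime, (p : ℝ)⁻¹)) atTop (nhds 0) := by
  simpa only [Real.sqrt_zero, Function.comp_def] using (Real.continuous_sqrt.tendsto 0).comp
    ((tendsto_const_nhds (x := (2 : ℝ))).div_atTop (tendsto_sum_inv_primes_Ico_atTop K))

theorem tendsto_inv_add_sqrt_nhds_zero (D : ℝ) :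
    Tendsto (fun K : ℕ => 1 / (K : ℝ) + √((1 + D / K) / K)) atTop (nhds 0) := by
  have hcont : Continuous fun x : ℝ => x + √((1 + D * x) * x) := by fun_prop
  simpa [Function.comp_def, div_eq_mul_inv] using
    (hcont.tendsto 0).comp tendsto_one_div_atTop_nhds_zero_nat

theorem moebius_disjointness_of_correlation_bound_general
    (F : ℕ → ℂ) (hF : ∀ n, 1 ≤ n → ‖F n‖ ≤ 1)
    (C : ℝ) (hC : 0 < C) (S : Finset (ℕ × ℕ))
    (hcorr : ∀ p q : ℕ, p.Prime → q.Prime → p ≠ q → (p, q) ∉ S →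
      Filter.limsup
        (fun M : ℕ => (1 / (M : ℝ)) *
          ‖∑ m ∈ Finset.Icc 1 M, F (p * m) * (starRingEnd ℂ) (F (q * m))‖)
        Filter.atTop ≤ C / (p * q)) :
    Filter.Tendsto
      (fun N : ℕ => (1 / (N : ℂ)) *
        ∑ n ∈ Finset.Icc 1 N, (ArithmeticFunction.moebius n : ℂ) * F n)
      Filter.atTop (nhds 0) := by
  rw [NormedAddGroup.tendsto_nhds_zero]
  intro ε hε
  obtain ⟨K, hKε, hKS, hK⟩ := (((tendsto_inv_add_sqrt_nhds_zero (2 * C)).eventually_lt_const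
    (half_pos hε)).and ((eventually_gt_atTop (S.sup Prod.fst)).and (eventually_gt_atTop 0))).exists
  obtain ⟨n, hL, hLε⟩ := ((tendsto_sum_inv_primes_Ico_atTop K).eventually_ge_atTop 1).and
    ((tendsto_sqrt_two_div_sum_inv_primes_Ico K).eventually_lt_const (half_pos hε)) |>.exists
  set P := {p ∈ Ico K n | p.Prime}
  have hP : ∀ p ∈ P, p.Prime ∧ K ≤ p := fun p hp =>
    ⟨(mem_filter.1 hp).2, (mem_Ico.1 (mem_filter.1 hp).1).1⟩
  have hlim : ∀ p ∈ P, ∀ q ∈ P, p ≠ q →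
      limsup (fun M : ℕ => 1 / (M : ℝ) * ‖corrSum F p q M‖) atTop ≤ C / (p * q) :=
    fun p hp q hq hpq => hcorr p q (hP p hp).1 (hP q hq).1 hpq fun hpqS =>
      (le_sup (f := Prod.fst) hpqS).not_gt (hKS.trans_le (hP p hp).2)
  filter_upwards [eventually_forall_norm_corrSum_min_le hF (fun p hp => (hP p hp).1.pos) hC hlim,
    eventually_ge_atTop (2 * #P), eventually_gt_atTop 0] with N hcorrN hN hN₀
  have hbound := norm_sum_moebius_mul_le hF hK hP hL (by positivity) hN hcorrN
  rw [norm_mul, norm_div, norm_one, Complex.norm_natCast, one_div_mul_eq_div,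
    div_lt_iff₀ (by exact_mod_cast hN₀)]
  calc _ ≤ _ := hbound
    _ < N * ε := by
        gcongr
        linarith
    _ = ε * N := mul_comm _ _

/-- A correlation bound of size C/(p·q) for all but finitely many pairs of distinct
primes implies non-correlation with the Möbius function on average. -/
theorem moebius_disjointness_of_correlation_bound
    (F : ℕ → ℂ) (hF : ∀ n, 1 ≤ n → ‖F n‖ ≤ 1)
    (C : ℝ) (hC : 0 < C) (S : Finset (ℕ × ℕ))
    (hS : ∀ pq ∈ S, pq.1.Prime ∧ pq.2.Prime)
    (hcorr : ∀ p q : ℕ, p.Prime → q.Prime → p ≠ q → (p, q) ∉ S →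
      Filter.limsup
        (fun M : ℕ => (1 / (M : ℝ)) *
          ‖∑ m ∈ Finset.Icc 1 M, F (p * m) * (starRingEnd ℂ) (F (q * m))‖)
        Filter.atTop ≤ C / (p * q)) :
    Filter.Tendsto
      (fun N : ℕ => (1 / (N : ℂ)) *
        ∑ n ∈ Finset.Icc 1 N, (ArithmeticFunction.moebius n : ℂ) * F n)
      Filter.atTop (nhds 0) :=
  moebius_disjointness_of_correlation_bound_general F hF C hC S hcorr
end

section
/- Let z ∈ ℝ be irrational and let g ∈ SL₂(ℝ) be an element of the commensurator of SL₂(ℤ) in SL₂(ℝ). Suppose g fixes the line through the vector (z, 1), i.e. there exists c ∈ ℝ such that g·(z,1)ᵀ = c·(z,1)ᵀ. If c² is a rational number, then c² = 1. -/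
open Matrix

/-- The subgroup `SL₂(ℤ)` of `SL₂(ℝ)`, via entrywise inclusion. -/
noncomputable def SL2Z_in_SL2R : Subgroup (Matrix.SpecialLinearGroup (Fin 2) ℝ) :=
  (Matrix.SpecialLinearGroup.map (n := Fin 2) (Int.castRingHom ℝ)).range

open Pointwise in
lemma conj_pow_mem {G : Type*} [Group G] {H : Subgroup G} {g : G}
    (hg : g ∈ Subgroup.Commensurable.commensurator H) {u : G} (hu : u ∈ H) :
    ∃ n : ℕ, 0 < n ∧ g * u ^ n * g⁻¹ ∈ H := by
  have hg' : g⁻¹ ∈ Subgroup.Commensurable.commensurator H := inv_mem hg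
  rw [Subgroup.Commensurable.commensurator_mem_iff] at hg'
  obtain ⟨n, hn, _, hmem⟩ := Subgroup.exists_pow_mem_of_relIndex_ne_zero hg'.1 hu
  refine ⟨n, hn, ?_⟩
  have h1 : u ^ n ∈ ConjAct.toConjAct g⁻¹ • H := hmem.1
  rw [Subgroup.mem_pointwise_smul_iff_inv_smul_mem] at h1
  rw [← ConjAct.toConjAct_inv, inv_inv, ConjAct.toConjAct_smul] at h1
  convert h1 using 1

-- entries of members of H are integers (hence rational)
lemma mem_entries {A : Matrix.SpecialLinearGroup (Fin 2) ℝ} (hA : A ∈ SL2Z_in_SL2R)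
    (i j : Fin 2) : ∃ q : ℚ, (A : Matrix (Fin 2) (Fin 2) ℝ) i j = (q : ℝ) := by
  obtain ⟨B, rfl⟩ := hA
  exact ⟨(B : Matrix (Fin 2) (Fin 2) ℤ) i j, by push_cast; simp [Matrix.SpecialLinearGroup.map_apply_coe] ⟩
-- (1+N)^n = 1 + n • N for N^2 = 0
lemma one_add_nilpotent_pow (N : Matrix (Fin 2) (Fin 2) ℝ) (hN : N * N = 0) (n : ℕ) :
    (1 + N) ^ n = 1 + (n : ℝ) • N := by
  induction n with
  | zero => simp
  | succ n ih =>
    rw [pow_succ, ih]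
    rw [add_mul, mul_add, mul_add, one_mul, mul_one, smul_mul_assoc, hN]
    push_cast
    rw [add_smul, one_smul, smul_zero, add_zero, one_mul, add_comm ((n:ℝ) • N) N, add_assoc]

-- kernel of a nonzero rational matrix is a rational line
lemma kernel_rational (M : Matrix (Fin 2) (Fin 2) ℝ)
    (hQ : ∀ i j, ∃ q : ℚ, M i j = (q : ℝ)) (hM : M ≠ 0)
    (w : Fin 2 → ℝ) (hw : w ≠ 0) (h : M.mulVec w = 0) :
    ∃ (q : Fin 2 → ℚ) (t : ℝ), t ≠ 0 ∧ w = t • (fun i => (q i : ℝ)) := by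
  -- find a nonzero row
  obtain ⟨i, j, hij⟩ : ∃ i j, M i j ≠ 0 := by
    by_contra hc; push_neg at hc; exact hM (by ext i j; simp [hc])
  obtain ⟨p, hp⟩ := hQ i 0
  obtain ⟨q, hq⟩ := hQ i 1
  have hrow : (p : ℝ) * w 0 + (q : ℝ) * w 1 = 0 := by
    have := congrFun h i
    simpa [Matrix.mulVec, dotProduct, Fin.sum_univ_two, hp, hq] using this
  have hpq : (p:ℝ)^2 + (q:ℝ)^2 ≠ 0 := by
    have hj : M i j ≠ 0 := hij
    have : (p:ℝ) ≠ 0 ∨ (q:ℝ) ≠ 0 := by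
      fin_cases j
      · exact Or.inl (hp ▸ hj)
      · exact Or.inr (hq ▸ hj)
    rcases this with h0 | h0 <;> positivity
  refine ⟨![-q, p], ((p:ℝ) * w 1 - (q:ℝ) * w 0) / ((p:ℝ)^2 + (q:ℝ)^2), ?_, ?_⟩
  · intro ht
    have h1 : (p:ℝ) * w 1 - (q:ℝ) * w 0 = 0 := by
      field_simp at ht; exact ht.trans (mul_zero _)
    -- then w = 0
    apply hw
    funext k
    fin_cases k
    · -- p w0 + q w1 = 0 and p w1 - q w0 = 0 ⇒ (p²+q²) w0 = 0
      have : ((p:ℝ)^2 + (q:ℝ)^2) * w 0 = 0 := by linear_combination (p:ℝ)*hrow - (q:ℝ)*h1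
      simpa [hpq] using mul_eq_zero.mp this
    · have : ((p:ℝ)^2 + (q:ℝ)^2) * w 1 = 0 := by linear_combination (q:ℝ)*hrow + (p:ℝ)*h1
      simpa [hpq] using mul_eq_zero.mp this
  · funext k
    fin_cases k
    · show w 0 = _ * (((-q : ℚ) : ℝ))
      push_cast
      field_simp
      linear_combination (p:ℝ)*hrow
    · show w 1 = _ * ((p : ℚ) : ℝ)
      field_simp
      linear_combination (q:ℝ)*hrow
noncomputable def mkH (a b c d : ℤ) (h : a * d - b * c = 1) :
    Matrix.SpecialLinearGroup (Fin 2) ℝ :=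
  Matrix.SpecialLinearGroup.map (Int.castRingHom ℝ)
    ⟨!![a, b; c, d], by rw [Matrix.det_fin_two_of]; linarith⟩

lemma mkH_mem (a b c d : ℤ) (h : a * d - b * c = 1) : mkH a b c d h ∈ SL2Z_in_SL2R :=
  ⟨_, rfl⟩

lemma mkH_coe (a b c d : ℤ) (h : a * d - b * c = 1) :
    (mkH a b c d h : Matrix (Fin 2) (Fin 2) ℝ) = !![(a:ℝ), b; c, d] := by
  ext i j
  fin_cases i <;> fin_cases j <;>
    rfl

lemma pow_ne_one_of_nilpotent (u : Matrix.SpecialLinearGroup (Fin 2) ℝ)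
    (N : Matrix (Fin 2) (Fin 2) ℝ) (hN : N * N = 0)
    (hu : (u : Matrix (Fin 2) (Fin 2) ℝ) = 1 + N)
    (i j : Fin 2) (hij : i ≠ j) (hNij : N i j ≠ 0)
    (hnil : ∀ n : ℕ, (1 + N) ^ n = 1 + (n : ℝ) • N)
    {n : ℕ} (hn : 0 < n) : u ^ n ≠ 1 := by
  intro h1
  have := congrArg (fun A : Matrix.SpecialLinearGroup (Fin 2) ℝ =>
    (A : Matrix (Fin 2) (Fin 2) ℝ) i j) h1
  simp only [Matrix.SpecialLinearGroup.coe_pow, hu, hnil n,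
    Matrix.SpecialLinearGroup.coe_one] at this
  rw [Matrix.add_apply, Matrix.smul_apply, Matrix.one_apply_ne hij, zero_add, smul_eq_mul] at this
  rcases mul_eq_zero.mp this with h | h
  · exact (Nat.cast_ne_zero.mpr hn.ne') (by exact_mod_cast h)
  · exact hNij h

lemma pow_fix (u : Matrix.SpecialLinearGroup (Fin 2) ℝ) (v : Fin 2 → ℝ)
    (hv : (u : Matrix (Fin 2) (Fin 2) ℝ).mulVec v = v) (n : ℕ) :
    ((u : Matrix (Fin 2) (Fin 2) ℝ) ^ n).mulVec v = v := by
  induction n with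
  | zero => simp
  | succ n ih => rw [pow_succ, ← Matrix.mulVec_mulVec, hv, ih]

lemma sl_mulVec_ne_zero (g : Matrix.SpecialLinearGroup (Fin 2) ℝ) (v : Fin 2 → ℝ)
    (hv : v ≠ 0) : (g : Matrix (Fin 2) (Fin 2) ℝ).mulVec v ≠ 0 := by
  intro h
  apply hv
  have h2 : ((g⁻¹ : Matrix.SpecialLinearGroup (Fin 2) ℝ) : Matrix (Fin 2) (Fin 2) ℝ).mulVec
      ((g : Matrix (Fin 2) (Fin 2) ℝ).mulVec v) = v := by
    rw [Matrix.mulVec_mulVec, ← Matrix.SpecialLinearGroup.coe_mul, inv_mul_cancel,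
      Matrix.SpecialLinearGroup.coe_one, Matrix.one_mulVec]
  rw [h, Matrix.mulVec_zero] at h2
  exact h2.symm

lemma gv_rational {g : Matrix.SpecialLinearGroup (Fin 2) ℝ}
    (hg : g ∈ Subgroup.Commensurable.commensurator SL2Z_in_SL2R)
    {u : Matrix.SpecialLinearGroup (Fin 2) ℝ} (hu : u ∈ SL2Z_in_SL2R)
    (hn1 : ∀ n : ℕ, 0 < n → u ^ n ≠ 1)
    (v : Fin 2 → ℝ) (hv : (u : Matrix (Fin 2) (Fin 2) ℝ).mulVec v = v) (hv0 : v ≠ 0) :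
    ∃ (q : Fin 2 → ℚ) (t : ℝ), t ≠ 0 ∧
      (g : Matrix (Fin 2) (Fin 2) ℝ).mulVec v = t • (fun i => (q i : ℝ)) := by
  obtain ⟨n, hn, hA⟩ := conj_pow_mem hg hu
  set A := g * u ^ n * g⁻¹ with hAdef
  set w := (g : Matrix (Fin 2) (Fin 2) ℝ).mulVec v with hwdef
  have hw0 : w ≠ 0 := sl_mulVec_ne_zero g v hv0
  have hAw : (A : Matrix (Fin 2) (Fin 2) ℝ).mulVec w = w := by
    have hAg : A * g = g * u ^ n := by rw [hAdef]; group
    have := congrArg (fun B : Matrix.SpecialLinearGroup (Fin 2) ℝ =>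
      (B : Matrix (Fin 2) (Fin 2) ℝ).mulVec v) hAg
    simp only [Matrix.SpecialLinearGroup.coe_mul, ← Matrix.mulVec_mulVec] at this
    rw [Matrix.SpecialLinearGroup.coe_pow, pow_fix u v hv n] at this
    exact this
  have hM0 : (A : Matrix (Fin 2) (Fin 2) ℝ) - 1 ≠ 0 := by
    intro h
    have : A = 1 := Subtype.coe_injective (by
      have := sub_eq_zero.mp h
      simpa [Matrix.SpecialLinearGroup.coe_one] using this)
    exact hn1 n hn (by
      have : u ^ n = g⁻¹ * 1 * g := by rw [← this, hAdef]; group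
      simpa using this)
  have hMQ : ∀ i j, ∃ q : ℚ, ((A : Matrix (Fin 2) (Fin 2) ℝ) - 1) i j = (q : ℝ) := by
    intro i j
    obtain ⟨q, hq⟩ := mem_entries hA i j
    refine ⟨q - (if i = j then 1 else 0), ?_⟩
    rw [Matrix.sub_apply, hq, Matrix.one_apply]
    push_cast
    split <;> simp
  have hker : ((A : Matrix (Fin 2) (Fin 2) ℝ) - 1).mulVec w = 0 := by
    rw [Matrix.sub_mulVec, hAw, Matrix.one_mulVec, sub_self]
  exact kernel_rational _ hMQ hM0 w hw0 hker


lemma irr_aux {x : ℝ} (hx : Irrational x) {p q : ℚ} (h : (p : ℝ) * x = (q : ℝ)) :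
    p = 0 ∧ q = 0 := by
  rcases eq_or_ne p 0 with hp | hp
  · refine ⟨hp, ?_⟩
    rw [hp, Rat.cast_zero, zero_mul] at h
    exact_mod_cast h.symm
  · exfalso
    refine hx ⟨q / p, ?_⟩
    have hp' : (p : ℝ) ≠ 0 := by exact_mod_cast hp
    push_cast
    field_simp
    linear_combination -h

lemma final_arith (z c lam : ℝ) (hz : Irrational z) (ma mb mc md : ℚ) (hlam : lam ≠ 0)
    (E1 : lam * ((ma : ℝ) * z + (mb : ℝ)) = c * z)
    (E2 : lam * ((mc : ℝ) * z + (md : ℝ)) = c)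
    (E3 : lam ^ 2 * ((ma : ℝ) * (md : ℝ) - (mb : ℝ) * (mc : ℝ)) = 1)
    (r : ℚ) (hr : (r : ℝ) = c ^ 2) : c ^ 2 = 1 := by
  have hdetR : ((ma : ℝ) * md - (mb : ℝ) * mc) ≠ 0 := by
    intro h; rw [h, mul_zero] at E3; exact one_ne_zero E3.symm
  have hdetQ : ma * md - mb * mc ≠ 0 := by
    intro h; apply hdetR; exact_mod_cast congrArg (fun q : ℚ => (q : ℝ)) h
  have hkey : (ma : ℝ) * z + mb - ((mc : ℝ) * z + md) * z = 0 := by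
    have h2 : lam * ((ma : ℝ) * z + mb - ((mc : ℝ) * z + md) * z) = 0 := by
      linear_combination E1 - z * E2
    rcases mul_eq_zero.mp h2 with h | h
    · exact absurd h hlam
    · exact h
  rcases eq_or_ne mc 0 with hmc | hmc
  · -- c = 0 case: M upper triangular, in fact scalar
    rw [hmc] at hkey E2 E3
    push_cast at hkey
    have h3 : ((ma - md : ℚ) : ℝ) * z = ((-mb : ℚ) : ℝ) := by push_cast; linear_combination hkey
    obtain ⟨h4, h5⟩ := irr_aux hz h3
    have hma : ma = md := by linarith [sub_eq_zero.mp h4]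
    have hmb : mb = 0 := by simpa [neg_eq_zero] using h5
    have hc : c = lam * md := by rw [← E2]; push_cast; ring
    rw [hc]
    push_cast [hmb, hma] at E3
    linear_combination E3
  · set μ : ℝ := (mc : ℝ) * z + md with hμ
    have hμirr : Irrational μ := (hz.ratCast_mul hmc).add_ratCast md
    have hqr : μ ^ 2 = ((ma : ℝ) + md) * μ - ((ma : ℝ) * md - (mb : ℝ) * mc) := by
      rw [hμ]; linear_combination (-(mc : ℝ)) * hkey
    have hc2 : c ^ 2 = lam ^ 2 * μ ^ 2 := by rw [← E2]; ring
    have hmu2 : μ ^ 2 = (r : ℝ) * ((ma : ℝ) * md - (mb : ℝ) * mc) := by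
      linear_combination (-((ma : ℝ) * md - (mb : ℝ) * mc)) * hr -
        ((ma : ℝ) * md - (mb : ℝ) * mc) * hc2 - μ ^ 2 * E3
    have h6 : ((ma + md : ℚ) : ℝ) * μ = (((r + 1) * (ma * md - mb * mc) : ℚ) : ℝ) := by
      push_cast
      linear_combination hmu2 - hqr
    obtain ⟨h7, h8⟩ := irr_aux hμirr h6
    have hr1 : r = -1 := by
      rcases mul_eq_zero.mp h8 with h | h
      · linarith
      · exact absurd h hdetQ
    rw [hr1] at hr
    push_cast at hr
    nlinarith [sq_nonneg c]

lemma bridge (z c : ℝ) (hz : Irrational z)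
    (q1 q2 q3 : Fin 2 → ℚ) (t1 t2 t3 : ℝ) (ht3 : t3 ≠ 0)
    (eqa : t1 * ((q1 0 : ℝ)) + t2 * ((q2 0 : ℝ)) = t3 * ((q3 0 : ℝ)))
    (eqb : t1 * ((q1 1 : ℝ)) + t2 * ((q2 1 : ℝ)) = t3 * ((q3 1 : ℝ)))
    (F0 : (t1 * (q1 0 : ℝ)) * z + t2 * (q2 0 : ℝ) = c * z)
    (F1 : (t1 * (q1 1 : ℝ)) * z + t2 * (q2 1 : ℝ) = c)
    (hdet : (t1 * (q1 0 : ℝ)) * (t2 * (q2 1 : ℝ)) - (t2 * (q2 0 : ℝ)) * (t1 * (q1 1 : ℝ)) = 1)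
    (r : ℚ) (hr : (r : ℝ) = c ^ 2) : c ^ 2 = 1 := by
  obtain ⟨D, hD⟩ : ∃ D : ℚ, D = q1 0 * q2 1 - q1 1 * q2 0 := ⟨_, rfl⟩
  obtain ⟨s1, hs1⟩ : ∃ s : ℚ, s = q3 0 * q2 1 - q3 1 * q2 0 := ⟨_, rfl⟩
  obtain ⟨s2, hs2⟩ : ∃ s : ℚ, s = q1 0 * q3 1 - q1 1 * q3 0 := ⟨_, rfl⟩
  have hDc : (D : ℝ) = (q1 0 : ℝ) * (q2 1 : ℝ) - (q1 1 : ℝ) * (q2 0 : ℝ) := by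
    rw [hD]; push_cast; ring
  have hs1c : (s1 : ℝ) = (q3 0 : ℝ) * (q2 1 : ℝ) - (q3 1 : ℝ) * (q2 0 : ℝ) := by
    rw [hs1]; push_cast; ring
  have hs2c : (s2 : ℝ) = (q1 0 : ℝ) * (q3 1 : ℝ) - (q1 1 : ℝ) * (q3 0 : ℝ) := by
    rw [hs2]; push_cast; ring
  have hDR : t1 * t2 * (D : ℝ) = 1 := by
    linear_combination hdet + t1 * t2 * hDc
  have hD0R : (D : ℝ) ≠ 0 := by
    intro h; rw [h, mul_zero] at hDR; exact one_ne_zero hDR.symm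
  have hDQ : D ≠ 0 := fun h => hD0R (by rw [h]; exact Rat.cast_zero)
  have ht1D : t1 * (D : ℝ) = t3 * (s1 : ℝ) := by
    linear_combination (q2 1 : ℝ) * eqa - (q2 0 : ℝ) * eqb + t1 * hDc - t3 * hs1c
  have ht2D : t2 * (D : ℝ) = t3 * (s2 : ℝ) := by
    linear_combination (q1 0 : ℝ) * eqb - (q1 1 : ℝ) * eqa + t2 * hDc - t3 * hs2c
  obtain ⟨ma, hma⟩ : ∃ m : ℚ, m = s1 * q1 0 / D := ⟨_, rfl⟩
  obtain ⟨mb, hmb⟩ : ∃ m : ℚ, m = s2 * q2 0 / D := ⟨_, rfl⟩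
  obtain ⟨mc, hmc⟩ : ∃ m : ℚ, m = s1 * q1 1 / D := ⟨_, rfl⟩
  obtain ⟨md, hmd⟩ : ∃ m : ℚ, m = s2 * q2 1 / D := ⟨_, rfl⟩
  have hA : (ma : ℝ) * (D : ℝ) = (s1 : ℝ) * (q1 0 : ℝ) := by
    have h : ma * D = s1 * q1 0 := by rw [hma]; field_simp
    calc (ma : ℝ) * (D : ℝ) = ((ma * D : ℚ) : ℝ) := by push_cast; ring
    _ = ((s1 * q1 0 : ℚ) : ℝ) := by rw [h]
    _ = (s1 : ℝ) * (q1 0 : ℝ) := by push_cast; ring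
  have hB : (mb : ℝ) * (D : ℝ) = (s2 : ℝ) * (q2 0 : ℝ) := by
    have h : mb * D = s2 * q2 0 := by rw [hmb]; field_simp
    calc (mb : ℝ) * (D : ℝ) = ((mb * D : ℚ) : ℝ) := by push_cast; ring
    _ = ((s2 * q2 0 : ℚ) : ℝ) := by rw [h]
    _ = (s2 : ℝ) * (q2 0 : ℝ) := by push_cast; ring
  have hC : (mc : ℝ) * (D : ℝ) = (s1 : ℝ) * (q1 1 : ℝ) := by
    have h : mc * D = s1 * q1 1 := by rw [hmc]; field_simp
    calc (mc : ℝ) * (D : ℝ) = ((mc * D : ℚ) : ℝ) := by push_cast; ring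
    _ = ((s1 * q1 1 : ℚ) : ℝ) := by rw [h]
    _ = (s1 : ℝ) * (q1 1 : ℝ) := by push_cast; ring
  have hDd : (md : ℝ) * (D : ℝ) = (s2 : ℝ) * (q2 1 : ℝ) := by
    have h : md * D = s2 * q2 1 := by rw [hmd]; field_simp
    calc (md : ℝ) * (D : ℝ) = ((md * D : ℚ) : ℝ) := by push_cast; ring
    _ = ((s2 * q2 1 : ℚ) : ℝ) := by rw [h]
    _ = (s2 : ℝ) * (q2 1 : ℝ) := by push_cast; ring
  have hE1 : (t3 * ((ma : ℝ) * z + (mb : ℝ))) * (D : ℝ) = (c * z) * (D : ℝ) := by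
    linear_combination z * t3 * hA + t3 * hB - z * (q1 0 : ℝ) * ht1D -
      (q2 0 : ℝ) * ht2D + (D : ℝ) * F0
  have hE2 : (t3 * ((mc : ℝ) * z + (md : ℝ))) * (D : ℝ) = c * (D : ℝ) := by
    linear_combination z * t3 * hC + t3 * hDd - z * (q1 1 : ℝ) * ht1D -
      (q2 1 : ℝ) * ht2D + (D : ℝ) * F1
  have hE3 : (t3 ^ 2 * ((ma : ℝ) * (md : ℝ) - (mb : ℝ) * (mc : ℝ))) * ((D : ℝ) * (D : ℝ))
      = 1 * ((D : ℝ) * (D : ℝ)) := by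
    linear_combination t3 ^ 2 * ((md : ℝ) * (D : ℝ)) * hA + t3 ^ 2 * ((s1 : ℝ) * (q1 0 : ℝ)) * hDd
      - t3 ^ 2 * ((mc : ℝ) * (D : ℝ)) * hB - t3 ^ 2 * ((s2 : ℝ) * (q2 0 : ℝ)) * hC
      - (D : ℝ) * (t3 * (s2 : ℝ)) * ht1D - (D : ℝ) * (t1 * (D : ℝ)) * ht2D
      + (D : ℝ) * (D : ℝ) * hDR - t3 ^ 2 * (s1 : ℝ) * (s2 : ℝ) * hDc
  exact final_arith z c t3 hz ma mb mc md ht3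
    (mul_right_cancel₀ hD0R hE1) (mul_right_cancel₀ hD0R hE2)
    (mul_right_cancel₀ (mul_ne_zero hD0R hD0R) hE3) r hr



/-- If `g` lies in the commensurator of `SL₂(ℤ)` in `SL₂(ℝ)` and fixes the line through
`(z,1)` with `z` irrational, scaling it by `c`, then `c² ∈ ℚ` forces `c² = 1`. -/
theorem character_rational_value_trivial
    (z : ℝ) (hz : Irrational z)
    (g : Matrix.SpecialLinearGroup (Fin 2) ℝ)
    (hg : g ∈ Subgroup.Commensurable.commensurator SL2Z_in_SL2R)
    (c : ℝ)
    (hfix : (g : Matrix (Fin 2) (Fin 2) ℝ).mulVec ![z, 1] = c • ![z, 1])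
    (hrat : ∃ r : ℚ, (r : ℝ) = c ^ 2) :
    c ^ 2 = 1 := by
  obtain ⟨r, hr⟩ := hrat
  -- the three unipotents
  have h11 : (1 : ℤ) * 1 - 1 * 0 = 1 := by ring
  have h22 : (1 : ℤ) * 1 - 0 * 1 = 1 := by ring
  have h33 : (0 : ℤ) * 2 - 1 * (-1) = 1 := by ring
  set u1 := mkH 1 1 0 1 h11 with hu1def
  set u2 := mkH 1 0 1 1 h22 with hu2def
  set u3 := mkH 0 1 (-1) 2 h33 with hu3def
  set N1 : Matrix (Fin 2) (Fin 2) ℝ := !![0,1;0,0] with hN1def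
  set N2 : Matrix (Fin 2) (Fin 2) ℝ := !![0,0;1,0] with hN2def
  set N3 : Matrix (Fin 2) (Fin 2) ℝ := !![-1,1;-1,1] with hN3def
  have hN1 : N1 * N1 = 0 := by
    rw [hN1def]; ext i j; fin_cases i <;> fin_cases j <;>
      simp [Matrix.mul_apply, Fin.sum_univ_two]
  have hN2 : N2 * N2 = 0 := by
    rw [hN2def]; ext i j; fin_cases i <;> fin_cases j <;>
      simp [Matrix.mul_apply, Fin.sum_univ_two]
  have hN3 : N3 * N3 = 0 := by
    rw [hN3def]; ext i j; fin_cases i <;> fin_cases j <;>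
      simp [Matrix.mul_apply, Fin.sum_univ_two]
  have hcoe1 : (u1 : Matrix (Fin 2) (Fin 2) ℝ) = 1 + N1 := by
    rw [hu1def, mkH_coe, hN1def]; ext i j; fin_cases i <;> fin_cases j <;>
      simp [Matrix.one_apply]
  have hcoe2 : (u2 : Matrix (Fin 2) (Fin 2) ℝ) = 1 + N2 := by
    rw [hu2def, mkH_coe, hN2def]; ext i j; fin_cases i <;> fin_cases j <;>
      simp [Matrix.one_apply]
  have hcoe3 : (u3 : Matrix (Fin 2) (Fin 2) ℝ) = 1 + N3 := by
    rw [hu3def, mkH_coe, hN3def]; ext i j; fin_cases i <;> fin_cases j <;>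
      simp [Matrix.one_apply] <;> norm_num
  have hn1 : ∀ n : ℕ, 0 < n → u1 ^ n ≠ 1 := fun n hn =>
    pow_ne_one_of_nilpotent u1 N1 hN1 hcoe1 0 1 (by decide)
      (by rw [hN1def]; norm_num) (one_add_nilpotent_pow N1 hN1) hn
  have hn2 : ∀ n : ℕ, 0 < n → u2 ^ n ≠ 1 := fun n hn =>
    pow_ne_one_of_nilpotent u2 N2 hN2 hcoe2 1 0 (by decide)
      (by rw [hN2def]; norm_num) (one_add_nilpotent_pow N2 hN2) hn
  have hn3 : ∀ n : ℕ, 0 < n → u3 ^ n ≠ 1 := fun n hn =>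
    pow_ne_one_of_nilpotent u3 N3 hN3 hcoe3 0 1 (by decide)
      (by rw [hN3def]; norm_num) (one_add_nilpotent_pow N3 hN3) hn
  have hfix1 : (u1 : Matrix (Fin 2) (Fin 2) ℝ).mulVec ![1, 0] = ![1, 0] := by
    rw [hu1def, mkH_coe]; funext k; fin_cases k <;>
      simp [Matrix.mulVec, dotProduct, Fin.sum_univ_two]
  have hfix2 : (u2 : Matrix (Fin 2) (Fin 2) ℝ).mulVec ![0, 1] = ![0, 1] := by
    rw [hu2def, mkH_coe]; funext k; fin_cases k <;>
      simp [Matrix.mulVec, dotProduct, Fin.sum_univ_two]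
  have hfix3 : (u3 : Matrix (Fin 2) (Fin 2) ℝ).mulVec ![1, 1] = ![1, 1] := by
    rw [hu3def, mkH_coe]; funext k; fin_cases k <;>
      simp [Matrix.mulVec, dotProduct, Fin.sum_univ_two] <;> norm_num
  have hv1 : (![1, 0] : Fin 2 → ℝ) ≠ 0 := by
    intro h; have := congrFun h 0; norm_num at this
  have hv2 : (![0, 1] : Fin 2 → ℝ) ≠ 0 := by
    intro h; have := congrFun h 1; norm_num at this
  have hv3 : (![1, 1] : Fin 2 → ℝ) ≠ 0 := by
    intro h; have := congrFun h 0; norm_num at this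
  obtain ⟨q1, t1, ht1, hw1⟩ := gv_rational hg (mkH_mem 1 1 0 1 h11) hn1 ![1, 0] hfix1 hv1
  obtain ⟨q2, t2, ht2, hw2⟩ := gv_rational hg (mkH_mem 1 0 1 1 h22) hn2 ![0, 1] hfix2 hv2
  obtain ⟨q3, t3, ht3, hw3⟩ := gv_rational hg (mkH_mem 0 1 (-1) 2 h33) hn3 ![1, 1] hfix3 hv3
  -- the columns of g
  have A00 : (g : Matrix (Fin 2) (Fin 2) ℝ) 0 0 = t1 * (q1 0 : ℝ) := by
    have := congrFun hw1 0
    simpa [Matrix.mulVec, dotProduct, Fin.sum_univ_two] using this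
  have A10 : (g : Matrix (Fin 2) (Fin 2) ℝ) 1 0 = t1 * (q1 1 : ℝ) := by
    have := congrFun hw1 1
    simpa [Matrix.mulVec, dotProduct, Fin.sum_univ_two] using this
  have A01 : (g : Matrix (Fin 2) (Fin 2) ℝ) 0 1 = t2 * (q2 0 : ℝ) := by
    have := congrFun hw2 0
    simpa [Matrix.mulVec, dotProduct, Fin.sum_univ_two] using this
  have A11 : (g : Matrix (Fin 2) (Fin 2) ℝ) 1 1 = t2 * (q2 1 : ℝ) := by
    have := congrFun hw2 1
    simpa [Matrix.mulVec, dotProduct, Fin.sum_univ_two] using this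
  have B0 : (g : Matrix (Fin 2) (Fin 2) ℝ) 0 0 + (g : Matrix (Fin 2) (Fin 2) ℝ) 0 1
      = t3 * (q3 0 : ℝ) := by
    have := congrFun hw3 0
    simpa [Matrix.mulVec, dotProduct, Fin.sum_univ_two] using this
  have B1 : (g : Matrix (Fin 2) (Fin 2) ℝ) 1 0 + (g : Matrix (Fin 2) (Fin 2) ℝ) 1 1
      = t3 * (q3 1 : ℝ) := by
    have := congrFun hw3 1
    simpa [Matrix.mulVec, dotProduct, Fin.sum_univ_two] using this
  have eqa : t1 * (q1 0 : ℝ) + t2 * (q2 0 : ℝ) = t3 * (q3 0 : ℝ) := by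
    rw [← A00, ← A01]; exact B0
  have eqb : t1 * (q1 1 : ℝ) + t2 * (q2 1 : ℝ) = t3 * (q3 1 : ℝ) := by
    rw [← A10, ← A11]; exact B1
  have F0 : (t1 * (q1 0 : ℝ)) * z + t2 * (q2 0 : ℝ) = c * z := by
    have := congrFun hfix 0
    simp [Matrix.mulVec, dotProduct, Fin.sum_univ_two] at this
    rw [← A00, ← A01]; linarith [this]
  have F1 : (t1 * (q1 1 : ℝ)) * z + t2 * (q2 1 : ℝ) = c := by
    have := congrFun hfix 1
    simp [Matrix.mulVec, dotProduct, Fin.sum_univ_two] at this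
    rw [← A10, ← A11]; linarith [this]
  have hdet : (t1 * (q1 0 : ℝ)) * (t2 * (q2 1 : ℝ)) - (t2 * (q2 0 : ℝ)) * (t1 * (q1 1 : ℝ))
      = 1 := by
    have hd := g.2
    rw [Matrix.det_fin_two] at hd
    rw [← A00, ← A11, ← A01, ← A10]; exact hd
  exact bridge z c hz q1 q2 q3 t1 t2 t3 ht3 eqa eqb F0 F1 hdet r hr
end

section
/- An element g ∈ SL₂(ℝ) lies in the commensurator of SL₂(ℤ) in SL₂(ℝ) if and only if there exists a real number c > 0 such that every entry of the matrix c·g is rational (equivalently, g = (det A)^{−1/2}·A for some A ∈ GL₂(ℚ) with det A > 0). -/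
/-!
If `g` commensurates `SL₂(ℤ)`, then for every `γ ∈ SL₂(ℤ)` some power `γⁿ` (`n > 0`) is
conjugated by `g` back into `SL₂(ℤ)`. For `γ = T = [[1, 1], [0, 1]]` the conjugate `g⁻¹ Tⁿ g`
has entries `1 ± n c d`, `n d²`, `-n c²` (bottom row `(c, d)` of `g`), so the products of
entries within the bottom row of `g` are rational; applied to `S g` the same holds for the top
row. As `det g = 1`, every product of two entries of `g` is then rational, and `g / |g_pq|` is
rational for any nonzero entry `g_pq`.

Conversely, if `c g = A` is rational, then in `GL₂(ℝ)` the elements `g` and `A` differ by a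
central scalar, and `GL₂(ℚ)` commensurates `SL₂(ℤ)`
(`CongruenceSubgroup.isArithmetic_conj_SL2Z`); commensurators are transported along the
embedding `SL₂(ℝ) → GL₂(ℝ)`.
-/

open Matrix

open Pointwise
open scoped MatrixGroups

namespace Subgroup

variable {G G' : Type*} [Group G] [Group G']

lemma map_toConjAct_smul (f : G →* G') (H : Subgroup G) (g : G) :
    (ConjAct.toConjAct g • H).map f = ConjAct.toConjAct (f g) • H.map f := by
  simp only [pointwise_smul_def]
  ext x
  simp [ConjAct.smul_def]

namespace Commensurable

lemma normalizer_le_commensurator (H : Subgroup G) : normalizer (H : Set G) ≤ commensurator H :=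
  fun _ hg ↦ by rw [commensurator_mem_iff, conjAct_pointwise_smul_eq_self hg]

lemma map_mem_commensurator_map_iff {f : G →* G'} (hf : Function.Injective f)
    {H : Subgroup G} {g : G} : f g ∈ commensurator (H.map f) ↔ g ∈ commensurator H := by
  simp only [commensurator_mem_iff, Commensurable, ← map_toConjAct_smul,
    relIndex_map_map_of_injective _ _ hf]

lemma exists_pow_conj_mem_of_mem_commensurator {H : Subgroup G} {g h : G}
    (hg : g ∈ commensurator H) (hh : h ∈ H) : ∃ n : ℕ, 0 < n ∧ g⁻¹ * h ^ n * g ∈ H := by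
  obtain ⟨n, hn, -, hmem⟩ := exists_pow_mem_of_relIndex_ne_zero hg.1 hh
  refine ⟨n, hn, ?_⟩
  have : h ^ n ∈ ConjAct.toConjAct g • H := hmem.1
  rw [mem_pointwise_smul_iff_inv_smul_mem] at this
  rwa [← ConjAct.toConjAct_inv, ConjAct.toConjAct_smul, inv_inv] at this

end Commensurable

end Subgroup

lemma Subring.mul_mem_of_det_eq_one_of_row_mul_mem {R : Type*} [CommRing R] (K : Subring R)
    {M : Matrix (Fin 2) (Fin 2) R} (hdet : M.det = 1) (hrow : ∀ r i j, M r i * M r j ∈ K)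
    (r s i j : Fin 2) : M r i * M s j ∈ K := by
  have cross : ∀ i j, M 0 i * M 1 j ∈ K := fun i j ↦ by
    have : M 0 i * M 1 j =
        M 0 i * M 0 0 * (M 1 j * M 1 1) - M 0 i * M 0 1 * (M 1 j * M 1 0) := by
      rw [det_fin_two] at hdet
      linear_combination (M 0 i * M 1 j) * hdet.symm
    rw [this]
    exact sub_mem (mul_mem (hrow 0 i 0) (hrow 1 j 1)) (mul_mem (hrow 0 i 1) (hrow 1 j 0))
  fin_cases r <;> fin_cases s
  · exact hrow 0 i j
  · exact cross i j
  · rw [mul_comm]; exact cross j i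
  · exact hrow 1 i j

lemma Subfield.exists_pos_mul_mem_of_mul_self_mem {F : Type*} [Field F] [LinearOrder F]
    [IsStrictOrderedRing F] (K : Subfield F) {x : F} (hx : x ≠ 0) (hxx : x * x ∈ K) :
    ∃ c : F, 0 < c ∧ ∀ y, x * y ∈ K → c * y ∈ K := by
  refine ⟨|x| / (x * x), div_pos (abs_pos.2 hx) (mul_self_pos.2 hx), fun y hxy ↦ ?_⟩
  rcases abs_choice x with h | h
  · rw [h, div_mul_eq_mul_div]; exact div_mem hxy hxx
  · rw [h, div_mul_eq_mul_div, neg_mul]; exact div_mem (neg_mem hxy) hxx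

lemma Matrix.SpecialLinearGroup.SL2_inv_mul_unipotent_mul {R : Type*} [CommRing R]
    (g : SL(2, R)) (t : R) :
    ((g⁻¹ : SL(2, R)) : Matrix (Fin 2) (Fin 2) R) * !![1, t; 0, 1] * g =
      !![1 + t * (g 1 0 * g 1 1), t * (g 1 1 * g 1 1);
        -(t * (g 1 0 * g 1 0)), 1 - t * (g 1 0 * g 1 1)] := by
  have hdet := g.det_coe
  rw [det_fin_two] at hdet
  rw [coe_inv, adjugate_fin_two, eta_fin_two (g : Matrix (Fin 2) (Fin 2) R), mul_fin_two,
    mul_fin_two]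
  ext i j
  fin_cases i <;> fin_cases j <;> simp <;> grind

open Subgroup Subgroup.Commensurable Matrix.SpecialLinearGroup ModularGroup

namespace SL2Z_in_SL2R

lemma exists_int_eq_of_mem {x : SL(2, ℝ)} (hx : x ∈ SL2Z_in_SL2R) (i j : Fin 2) :
    ∃ m : ℤ, x i j = m := by
  obtain ⟨B, rfl⟩ := hx
  exact ⟨B i j, by simp [map_apply_coe]⟩

lemma coe_mem (γ : SL(2, ℤ)) : (γ : SL(2, ℝ)) ∈ SL2Z_in_SL2R := ⟨γ, rfl⟩

lemma map_toGL : SL2Z_in_SL2R.map toGL = 𝒮ℒ := by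
  rw [SL2Z_in_SL2R, MonoidHom.map_range, mapGL, algebraMap_int_eq]

lemma row_one_mul_mem_of_mem_commensurator {g : SL(2, ℝ)}
    (hg : g ∈ commensurator SL2Z_in_SL2R) (i j : Fin 2) :
    g 1 i * g 1 j ∈ (Rat.castHom ℝ).fieldRange := by
  obtain ⟨n, hn, hconj⟩ := exists_pow_conj_mem_of_mem_commensurator hg (coe_mem T)
  have key : ((g⁻¹ * (T : SL(2, ℝ)) ^ n * g : SL(2, ℝ)) : Matrix (Fin 2) (Fin 2) ℝ) =
      !![1 + n * (g 1 0 * g 1 1), n * (g 1 1 * g 1 1);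
        -(n * (g 1 0 * g 1 0)), 1 - n * (g 1 0 * g 1 1)] := by
    rw [← SL2_inv_mul_unipotent_mul, ← map_pow, Matrix.SpecialLinearGroup.coe_mul,
      Matrix.SpecialLinearGroup.coe_mul, coe_matrix_coe, ← zpow_natCast, coe_T_zpow]
    congr
    ext i j
    fin_cases i <;> fin_cases j <;> simp
  have hdiv : ∀ x : ℝ, n * x ∈ (Rat.castHom ℝ).fieldRange → x ∈ (Rat.castHom ℝ).fieldRange :=
    fun x hx ↦
      mul_div_cancel_left₀ x (Nat.cast_ne_zero.2 hn.ne') ▸ div_mem hx (natCast_mem _ n)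
  have hent : ∀ k l,
      (g⁻¹ * (T : SL(2, ℝ)) ^ n * g : SL(2, ℝ)) k l ∈ (Rat.castHom ℝ).fieldRange := fun k l ↦ by
    obtain ⟨m, hm⟩ := exists_int_eq_of_mem hconj k l
    exact hm ▸ intCast_mem _ m
  have h00 := hent 0 0
  have h01 := hent 0 1
  have h10 := hent 1 0
  rw [key] at h00 h01 h10
  simp only [of_apply, cons_val', cons_val_zero, cons_val_fin_one, cons_val_one, neg_mem_iff]
    at h00 h01 h10
  fin_cases i <;> fin_cases j
  · exact hdiv _ h10
  · exact hdiv _ ((add_mem_cancel_left (one_mem _)).1 h00)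
  · rw [mul_comm]
    exact hdiv _ ((add_mem_cancel_left (one_mem _)).1 h00)
  · exact hdiv _ h01

lemma mul_mem_of_mem_commensurator {g : SL(2, ℝ)} (hg : g ∈ commensurator SL2Z_in_SL2R)
    (r s i j : Fin 2) : g r i * g s j ∈ (Rat.castHom ℝ).fieldRange := by
  refine (Rat.castHom ℝ).fieldRange.toSubring.mul_mem_of_det_eq_one_of_row_mul_mem g.det_coe
    (fun r i j ↦ ?_) r s i j
  fin_cases r
  · have hSg : (S : SL(2, ℝ)) * g ∈ commensurator SL2Z_in_SL2R :=
      mul_mem (normalizer_le_commensurator _ (le_normalizer (coe_mem S))) hg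
    simpa [Matrix.SpecialLinearGroup.coe_mul, coe_matrix_coe, mul_apply, Fin.sum_univ_two,
      -RingHom.mem_fieldRange] using row_one_mul_mem_of_mem_commensurator hSg i j
  · exact row_one_mul_mem_of_mem_commensurator hg i j

lemma exists_pos_mul_mem_of_mem_commensurator {g : SL(2, ℝ)}
    (hg : g ∈ commensurator SL2Z_in_SL2R) :
    ∃ c : ℝ, 0 < c ∧ ∀ i j, c * g i j ∈ (Rat.castHom ℝ).fieldRange := by
  obtain ⟨p, q, hpq⟩ : ∃ p q, g p q ≠ 0 := by
    by_contra! h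
    have : (g : Matrix (Fin 2) (Fin 2) ℝ) = 0 := Matrix.ext h
    simpa [this] using g.det_coe
  obtain ⟨c, hc, hmul⟩ := (Rat.castHom ℝ).fieldRange.exists_pos_mul_mem_of_mul_self_mem hpq
    (mul_mem_of_mem_commensurator hg p p q q)
  exact ⟨c, hc, fun i j ↦ hmul _ (mul_mem_of_mem_commensurator hg p i q j)⟩

lemma mem_commensurator_of_map_ratCast_eq_smul {g : SL(2, ℝ)} {c : ℝ} (hc : c ≠ 0)
    (A : Matrix (Fin 2) (Fin 2) ℚ) (hA : A.map (↑) = c • (g : Matrix (Fin 2) (Fin 2) ℝ)) :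
    g ∈ commensurator SL2Z_in_SL2R := by
  have hdet : A.det ≠ 0 := by
    have : ((A.det : ℚ) : ℝ) = c ^ 2 := by
      rw [← Rat.coe_castHom, RingHom.map_det, RingHom.mapMatrix_apply, Rat.coe_castHom, hA,
        det_smul, g.det_coe]
      simp
    exact_mod_cast this ▸ pow_ne_zero 2 hc
  set A' := (GeneralLinearGroup.mkOfDetNeZero A hdet).map (Rat.castHom ℝ)
  have hA' : A' ∈ commensurator 𝒮ℒ :=
    (CongruenceSubgroup.isArithmetic_conj_SL2Z _).is_commensurable
  have hcenter : (toGL g)⁻¹ * A' ∈ center (GL (Fin 2) ℝ) := by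
    rw [GeneralLinearGroup.mem_center_iff_val_mem_range_scalar]
    refine ⟨c, ?_⟩
    have hA'val : (A' : Matrix (Fin 2) (Fin 2) ℝ) = c • (g : Matrix (Fin 2) (Fin 2) ℝ) := hA
    rw [Units.val_mul, ← map_inv, coe_GL_coe_matrix, hA'val, mul_smul_comm,
      ← Matrix.SpecialLinearGroup.coe_mul, inv_mul_cancel, Matrix.SpecialLinearGroup.coe_one,
      smul_one_eq_diagonal, scalar_apply]
  have hg : toGL g = A' * ((toGL g)⁻¹ * A')⁻¹ := by group
  rw [← map_mem_commensurator_map_iff toGL_injective, map_toGL, hg]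
  exact mul_mem hA' (normalizer_le_commensurator _ (center_le_normalizer _ (inv_mem hcenter)))

end SL2Z_in_SL2R

/-- `g ∈ SL₂(ℝ)` lies in the commensurator of `SL₂(ℤ)` iff some positive real multiple
of `g` has all entries rational. -/
theorem mem_commensurator_SL2Z_iff
    (g : Matrix.SpecialLinearGroup (Fin 2) ℝ) :
    g ∈ Subgroup.Commensurable.commensurator SL2Z_in_SL2R ↔
      ∃ c : ℝ, 0 < c ∧ ∀ i j : Fin 2, ∃ r : ℚ,
        c * (g : Matrix (Fin 2) (Fin 2) ℝ) i j = (r : ℝ) := by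
  constructor
  · intro hg
    obtain ⟨c, hc, hmem⟩ := SL2Z_in_SL2R.exists_pos_mul_mem_of_mem_commensurator hg
    refine ⟨c, hc, fun i j ↦ ?_⟩
    obtain ⟨r, hr⟩ := hmem i j
    exact ⟨r, hr.symm⟩
  · rintro ⟨c, hc, h⟩
    choose r hr using h
    exact SL2Z_in_SL2R.mem_commensurator_of_map_ratCast_eq_smul hc.ne' (Matrix.of r)
      (by ext i j; simp [hr])
end

section
/- Let z ∈ ℝ be irrational, let h ∈ GL₂(ℚ), and let t ∈ ℝ with t ∉ {0, 1, −1}. Set g = h · diag(t, t⁻¹) · h⁻¹, a real 2×2 matrix (h being viewed as a real matrix via the inclusion ℚ ⊂ ℝ). Then g does not fix the projective point [z : 1]: there is no c ∈ ℝ with g·(z,1)ᵀ = c·(z,1)ᵀ. -/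
/-!
Conjugating back by `h`, the vector `w = h⁻¹ (z, 1)` is an eigenvector of `diag(t, t⁻¹)`.
Each coordinate of `w` is `a z + b` for a nonzero rational row `(a, b)` of `h⁻¹`, hence
nonzero since `z` is irrational. So `w` lies on neither coordinate axis, both diagonal entries
equal the eigenvalue, and `t = t⁻¹` forces `t ∈ {0, 1, -1}`.
-/

open Matrix

theorem Irrational.ratCast_mul_add_ne_zero {z : ℝ} (hz : Irrational z) {a b : ℚ}
    (hab : a ≠ 0 ∨ b ≠ 0) : (a : ℝ) * z + b ≠ 0 := by
  by_cases ha : a = 0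
  · simpa [ha] using hab
  · exact ((hz.ratCast_mul ha).add_ratCast b).ne_zero

theorem Matrix.GeneralLinearGroup.row_ne_zero {n R : Type*} [Fintype n] [DecidableEq n]
    [CommRing R] [Nontrivial R] (P : GL n R) (i : n) : (P : Matrix n n R) i ≠ 0 := fun hi =>
  P.isUnit.map detMonoidHom |>.ne_zero <| det_eq_zero_of_row_eq_zero i fun j => congrFun hi j

theorem Matrix.map_ratCast_mulVec_irrational_ne_zero {m : Type*} (M : Matrix m (Fin 2) ℚ)
    {i : m} (hi : M i ≠ 0) {z : ℝ} (hz : Irrational z) :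
    (M.map ((↑) : ℚ → ℝ) *ᵥ ![z, 1]) i ≠ 0 := by
  have hrow : M i 0 ≠ 0 ∨ M i 1 ≠ 0 := by
    by_contra! h0
    exact hi (funext fun j => by fin_cases j <;> simp [h0])
  simpa [mulVec, dotProduct, Fin.sum_univ_two] using hz.ratCast_mul_add_ne_zero hrow

theorem Matrix.eq_of_diagonal_mulVec_eq_smul {n R : Type*} [Fintype n] [DecidableEq n]
    [Semiring R] [IsRightCancelMulZero R] {d w : n → R} {c : R}
    (hw : diagonal d *ᵥ w = c • w) {i : n} (hi : w i ≠ 0) : d i = c :=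
  mul_right_cancel₀ hi (by simpa [mulVec_diagonal] using congrFun hw i)

theorem Matrix.mulVec_of_conj_mulVec_eq_smul {n R : Type*} [Fintype n] [DecidableEq n]
    [CommSemiring R] {P Q D : Matrix n n R} (hQP : Q * P = 1) {v : n → R} {c : R}
    (hv : (P * D * Q) *ᵥ v = c • v) : D *ᵥ (Q *ᵥ v) = c • (Q *ᵥ v) := by
  simpa [mulVec_mulVec, ← Matrix.mul_assoc, hQP, mulVec_smul] using congrArg (Q *ᵥ ·) hv

/-- A `GL₂(ℚ)`-conjugate of the diagonal matrix `diag(t, t⁻¹)`, with `t ∉ {0, 1, -1}`,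
does not fix an irrational point `[z : 1]` of the projective line. -/
theorem no_rational_split_torus_fixes_irrational
    (z : ℝ) (hz : Irrational z)
    (h : GL (Fin 2) ℚ) (t : ℝ) (ht0 : t ≠ 0) (ht1 : t ≠ 1) (htm1 : t ≠ -1) :
    ¬ ∃ c : ℝ,
      (((h : Matrix (Fin 2) (Fin 2) ℚ).map ((↑) : ℚ → ℝ) *
        Matrix.diagonal ![t, t⁻¹] *
        ((↑(h⁻¹) : Matrix (Fin 2) (Fin 2) ℚ).map ((↑) : ℚ → ℝ))).mulVec ![z, 1])
        = c • ![z, 1] := by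
  rintro ⟨c, hc⟩
  -- `(map f h)⁻¹` unfolds to `map f h⁻¹`, so this is the real image of `h⁻¹ * h = 1`.
  have heigen := mulVec_of_conj_mulVec_eq_smul
    (GeneralLinearGroup.map (Rat.castHom ℝ) h).inv_mul hc
  have hw (i : Fin 2) := map_ratCast_mulVec_irrational_ne_zero _ (h⁻¹.row_ne_zero i) hz
  have ht : t⁻¹ = t := by
    simpa using (eq_of_diagonal_mulVec_eq_smul heigen (hw 1)).trans
      (eq_of_diagonal_mulVec_eq_smul heigen (hw 0)).symm
  rcases inv_eq_self₀.mp ht with rfl | rfl | rfl <;> contradiction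
end

section
/- The orbit of the point i under SL₂(ℤ) in the upper half-plane avoids a horoball at ∞ and at every rational boundary point. Precisely: (i) there exists T > 0 such that Im(γ·i) ≤ T for all γ ∈ SL₂(ℤ); and (ii) for every x ∈ ℚ there exists r > 0 such that |γ·i − (x + r·i)| ≥ r for all γ ∈ SL₂(ℤ) (the orbit point γ·i being regarded as an element of ℂ). Hence no point of ℙ¹(ℚ) is a horospherical limit point of SL₂(ℤ). -/
open Matrix Complex

/-- The image of `i ∈ ℍ` under the Möbius action of `γ ∈ SL₂(ℤ)`, as a complex number. -/
noncomputable def moebiusActI (γ : Matrix.SpecialLinearGroup (Fin 2) ℤ) : ℂ :=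
  (((γ : Matrix (Fin 2) (Fin 2) ℤ) 0 0 : ℂ) * Complex.I +
      ((γ : Matrix (Fin 2) (Fin 2) ℤ) 0 1 : ℂ)) /
    (((γ : Matrix (Fin 2) (Fin 2) ℤ) 1 0 : ℂ) * Complex.I +
      ((γ : Matrix (Fin 2) (Fin 2) ℤ) 1 1 : ℂ))

/-!
For `γ = (a b; c d)`, `γ·i = (a i + b) / (c i + d)` has imaginary part `1 / (c² + d²) ≤ 1`, because
`ad - bc = 1` makes `(c, d)` a nonzero integer vector. A point `z` lies outside the open horoball of
parameter `r` at `x` iff `2 r Im z ≤ |z - x|²`. For `x = p / q` and `z = γ·i`,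
`q² (c² + d²) |z - x|² = (qa - pc)² + (qb - pd)² ≥ 1 = (c² + d²) Im z`, since `(qa - pc, qb - pd)` is
again a nonzero integer vector; hence `r = 1 / (2 q²)` works.
-/

open scoped MatrixGroups

lemma one_le_sq_add_sq_of_det_ne_zero {a b c d : ℤ} (h : a * d - b * c ≠ 0) :
    1 ≤ c ^ 2 + d ^ 2 := by
  by_cases hc : c = 0
  · have hd : d ≠ 0 := by rintro rfl; simp [hc] at h
    nlinarith [(one_le_sq_iff_one_le_abs d).2 (Int.one_le_abs hd), sq_nonneg c]
  · nlinarith [(one_le_sq_iff_one_le_abs c).2 (Int.one_le_abs hc), sq_nonneg d]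

namespace Complex

lemma im_div_mul_I_add (a b c d : ℝ) :
    ((a * I + b) / (c * I + d)).im = (a * d - b * c) / normSq (c * I + d) := by
  simp only [div_im, add_im, mul_im, ofReal_re, I_im, mul_one, ofReal_im, I_re, mul_zero, add_zero,
    add_re, mul_re, sub_self, zero_add]
  ring

lemma normSq_div_mul_I_add_sub {c d : ℝ} (h : (c : ℂ) * I + d ≠ 0) (a b x : ℝ) :
    normSq ((a * I + b) / (c * I + d) - x) =
      ((a - x * c) ^ 2 + (b - x * d) ^ 2) / normSq (c * I + d) := by
  rw [div_sub' h, normSq_div, normSq_apply, normSq_apply]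
  simp only [sub_re, add_re, mul_re, ofReal_re, I_re, mul_zero, ofReal_im, I_im, mul_one, sub_self,
    zero_add, add_im, mul_im, add_zero, sub_zero, sub_im]
  ring

lemma le_norm_sub_mul_I_iff {r : ℝ} (hr : 0 ≤ r) (z : ℂ) :
    r ≤ ‖z - r * I‖ ↔ 2 * r * z.im ≤ normSq z := by
  rw [← pow_le_pow_iff_left₀ hr (norm_nonneg _) two_ne_zero, Complex.sq_norm, normSq_apply,
    normSq_apply]
  simp only [sub_re, mul_re, ofReal_re, I_re, mul_zero, ofReal_im, I_im, mul_one, sub_self, sub_zero,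
    sub_im, mul_im, add_zero]
  constructor <;> intro h <;> nlinarith

end Complex

lemma Matrix.SpecialLinearGroup.det_fin_two_eq_one {R : Type*} [CommRing R] (g : SL(2, R)) :
    g 0 0 * g 1 1 - g 0 1 * g 1 0 = 1 := by
  rw [← Matrix.det_fin_two]
  exact g.det_coe

namespace moebiusActI

variable (γ : SL(2, ℤ))

lemma eq_div : moebiusActI γ =
    ((γ 0 0 : ℝ) * I + (γ 0 1 : ℝ)) / ((γ 1 0 : ℝ) * I + (γ 1 1 : ℝ)) := by
  simp [moebiusActI]

lemma one_le_normSq_denom : 1 ≤ normSq ((γ 1 0 : ℝ) * I + (γ 1 1 : ℝ)) := by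
  have h : 1 ≤ γ 1 0 ^ 2 + γ 1 1 ^ 2 :=
    one_le_sq_add_sq_of_det_ne_zero (γ.det_fin_two_eq_one ▸ one_ne_zero)
  simpa [normSq_apply, ← sq, add_comm] using (Int.cast_le (R := ℝ)).2 h

lemma im_eq : (moebiusActI γ).im = 1 / normSq ((γ 1 0 : ℝ) * I + (γ 1 1 : ℝ)) := by
  rw [eq_div, im_div_mul_I_add]
  exact_mod_cast congrArg (fun t : ℤ => (t : ℝ) / _) γ.det_fin_two_eq_one

lemma im_le_one : (moebiusActI γ).im ≤ 1 := by
  rw [im_eq]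
  exact div_le_one_of_le₀ (one_le_normSq_denom γ) (normSq_nonneg _)

/-- The integer vector `(q a - p c, q b - p d)` is nonzero: its determinant against `(c, d)` is `q`. -/
lemma one_le_den_sq_mul (x : ℚ) :
    1 ≤ (x.den : ℝ) ^ 2 * (((γ 0 0 : ℝ) - x * γ 1 0) ^ 2 + ((γ 0 1 : ℝ) - x * γ 1 1) ^ 2) := by
  set u := (x.den : ℤ) * γ 0 0 - x.num * γ 1 0
  set v := (x.den : ℤ) * γ 0 1 - x.num * γ 1 1
  have huv : γ 1 1 * u - γ 1 0 * v = x.den := by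
    linear_combination (x.den : ℤ) * γ.det_fin_two_eq_one
  have h : 1 ≤ v ^ 2 + u ^ 2 := one_le_sq_add_sq_of_det_ne_zero (by rw [huv]; positivity)
  have hx : (x : ℝ) * x.den = x.num := by
    rw [Rat.cast_def]; field_simp
  calc (1 : ℝ) ≤ (v : ℝ) ^ 2 + (u : ℝ) ^ 2 := by exact_mod_cast h
    _ = _ := by push_cast [u, v]; rw [← hx]; ring

lemma im_le_den_sq_mul_normSq_sub (x : ℚ) :
    (moebiusActI γ).im ≤ x.den ^ 2 * normSq (moebiusActI γ - x) := by
  have hne : ((γ 1 0 : ℝ) : ℂ) * I + (γ 1 1 : ℝ) ≠ 0 :=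
    normSq_pos.1 (zero_lt_one.trans_le (one_le_normSq_denom γ))
  rw [im_eq, ← ofReal_ratCast, eq_div, normSq_div_mul_I_add_sub hne, mul_div_assoc']
  exact div_le_div_of_nonneg_right (one_le_den_sq_mul γ x) (normSq_nonneg _)

end moebiusActI

/-- The orbit `SL₂(ℤ)·i` avoids a horoball at `∞` and a horoball at every rational
boundary point; hence no point of `ℙ¹(ℚ)` is a horospherical limit point of `SL₂(ℤ)`. -/
theorem rational_points_not_horospherical_limit_points :
    (∃ T : ℝ, 0 < T ∧ ∀ γ : Matrix.SpecialLinearGroup (Fin 2) ℤ,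
        (moebiusActI γ).im ≤ T) ∧
    (∀ x : ℚ, ∃ r : ℝ, 0 < r ∧ ∀ γ : Matrix.SpecialLinearGroup (Fin 2) ℤ,
        r ≤ ‖moebiusActI γ - ((x : ℂ) + (r : ℂ) * Complex.I)‖) := by
  refine ⟨⟨1, one_pos, moebiusActI.im_le_one⟩, fun x => ?_⟩
  have hr : (0 : ℝ) < 1 / (2 * x.den ^ 2) := by positivity
  refine ⟨1 / (2 * x.den ^ 2), hr, fun γ => ?_⟩
  rw [← sub_sub, le_norm_sub_mul_I_iff hr.le, sub_im, ratCast_im, sub_zero]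
  calc 2 * (1 / (2 * x.den ^ 2)) * (moebiusActI γ).im = (moebiusActI γ).im / x.den ^ 2 := by
        field_simp
    _ ≤ normSq (moebiusActI γ - x) := by
        rw [div_le_iff₀' (by positivity)]
        exact moebiusActI.im_le_den_sq_mul_normSq_sub γ x
end

section
/- Let 𝔥 be a finite-dimensional real Lie algebra, let 𝔯 denote its radical (the largest solvable ideal of 𝔥), and let 𝔩 be a Lie subalgebra of 𝔥 which is semisimple and satisfies 𝔥 = 𝔩 ⊕ 𝔯 as vector spaces (i.e. 𝔩 ∩ 𝔯 = 0 and 𝔩 + 𝔯 = 𝔥). If 𝔫 is a Lie ideal of 𝔥 such that 𝔫 + 𝔯 = 𝔥, then 𝔩 ⊆ 𝔫. -/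
/-!
If `𝔯⁽ᵐ⁾ = 0`, then `𝔥⁽ᵐ⁾ = (𝔫 + 𝔯)⁽ᵐ⁾ ⊆ 𝔫 + 𝔯⁽ᵐ⁾ = 𝔫`. A semisimple Lie algebra is perfect,
so `𝔩 = 𝔩⁽ᵐ⁾ ⊆ 𝔥⁽ᵐ⁾ ⊆ 𝔫`.
-/

open LieAlgebra

section

variable {R L : Type*} [CommRing R] [LieRing L] [LieAlgebra R L]

theorem LieAlgebra.IsSemisimple.derivedSeries_one_eq_top [IsSemisimple R L] :
    derivedSeries R L 1 = ⊤ := by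
  rw [eq_top_iff, ← IsSemisimple.sSup_atoms_eq_top (R := R) (L := L), sSup_le_iff]
  intro J hJ
  calc J = ⁅J, J⁆ :=
        (lie_eq_self_of_isAtom_of_nonabelian J hJ (IsSemisimple.non_abelian_of_isAtom J hJ)).symm
    _ ≤ ⁅⊤, ⊤⁆ := LieSubmodule.mono_lie le_top le_top

theorem LieAlgebra.IsSemisimple.derivedSeries_eq_top [IsSemisimple R L] (k : ℕ) :
    derivedSeries R L k = ⊤ :=
  LieIdeal.derivedSeries_eq_top k IsSemisimple.derivedSeries_one_eq_top

theorem LieAlgebra.derivedSeries_le_of_sup_eq_top {I J : LieIdeal R L} {m : ℕ}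
    (hJ : derivedSeriesOfIdeal R L m J = ⊥) (hIJ : I ⊔ J = ⊤) :
    derivedSeries R L m ≤ I := by
  simpa [derivedSeries_def, ← hIJ, hJ] using derivedSeriesOfIdeal_add_le_add I J 0 m

theorem LieSubalgebra.toSubmodule_le_derivedSeries (H : LieSubalgebra R L) [IsSemisimple R H]
    (k : ℕ) : H.toSubmodule ≤ (derivedSeries R L k).toSubmodule := by
  intro x hx
  have hmap := LieIdeal.derivedSeries_map_le (f := H.incl) k
  rw [IsSemisimple.derivedSeries_eq_top] at hmap
  exact hmap (LieIdeal.mem_map (LieSubmodule.mem_top (⟨x, hx⟩ : H)))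

end

theorem levi_subalgebra_le_ideal_of_sup_radical_eq_top_general
    {L : Type*} [LieRing L] [LieAlgebra ℝ L] [Module.Finite ℝ L]
    (𝔩 : LieSubalgebra ℝ L) [LieAlgebra.IsSemisimple ℝ 𝔩]
    (𝔫 : LieIdeal ℝ L)
    (hn : 𝔫.toSubmodule ⊔ (LieAlgebra.radical ℝ L).toSubmodule = ⊤) :
    𝔩.toSubmodule ≤ 𝔫.toSubmodule := by
  obtain ⟨m, hm⟩ := IsSolvable.solvable ℝ (radical ℝ L)
  rw [LieIdeal.derivedSeries_eq_bot_iff] at hm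
  have hsup : 𝔫 ⊔ radical ℝ L = ⊤ := by
    rwa [← LieSubmodule.toSubmodule_inj, LieSubmodule.sup_toSubmodule,
      LieSubmodule.top_toSubmodule]
  exact (LieSubalgebra.toSubmodule_le_derivedSeries 𝔩 m).trans
    (derivedSeries_le_of_sup_eq_top hm hsup)

/-- If `𝔥 = 𝔩 ⊕ 𝔯` is a Levi decomposition of a finite-dimensional real Lie algebra
(`𝔩` semisimple, `𝔯` the radical) and `𝔫` is an ideal with `𝔫 + 𝔯 = 𝔥`,
then `𝔩 ⊆ 𝔫`. -/
theorem levi_subalgebra_le_ideal_of_sup_radical_eq_top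
    {L : Type*} [LieRing L] [LieAlgebra ℝ L] [Module.Finite ℝ L]
    (𝔩 : LieSubalgebra ℝ L) [LieAlgebra.IsSemisimple ℝ 𝔩]
    (hinf : 𝔩.toSubmodule ⊓ (LieAlgebra.radical ℝ L).toSubmodule = ⊥)
    (hsup : 𝔩.toSubmodule ⊔ (LieAlgebra.radical ℝ L).toSubmodule = ⊤)
    (𝔫 : LieIdeal ℝ L)
    (hn : 𝔫.toSubmodule ⊔ (LieAlgebra.radical ℝ L).toSubmodule = ⊤) :
    𝔩.toSubmodule ≤ 𝔫.toSubmodule :=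
  levi_subalgebra_le_ideal_of_sup_radical_eq_top_general 𝔩 𝔫 hn
end
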